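/- arXiv:math/0504214 — 12 statements merged into one kernel-verified Lean document; each statement's English description precedes it below -/
import Mathlib

section
/- If X is a weird space, then there exists a point x ∈ X whose connected component in X is not a singleton; consequently this component is weird and connected. -/
/-- A space is scattered iff every nonempty subset has a point isolated in it. -/
def ScatteredSpace (X : Type*) [TopologicalSpace X] : Prop :=
  ∀ S : Set X, S.Nonempty → ∃ x ∈ S, ∃ U : Set X, IsOpen U ∧ U ∩ S = {x}

/-- A space is weird iff it is compact Hausdorff, not scattered, and no subset
is simultaneously perfect (closed, nonempty, no isolated points) and totally
disconnected. -/
def Weird (X : Type*) [TopologicalSpace X] : Prop :=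
  CompactSpace X ∧ T2Space X ∧ ¬ ScatteredSpace X ∧
    ∀ P : Set X, Perfect P → P.Nonempty → ¬ IsTotallyDisconnected P

/-!
If every component of a weird space `X` were a singleton, `X` would be totally disconnected; but
a non-scattered T1 space contains a nonempty perfect set (the closure of a nonempty set without
isolated points), which would then be perfect and totally disconnected. So some component `C` is
not a singleton. It is closed, hence compact Hausdorff; a nontrivial connected T1 space has no
isolated points, so `C` is not scattered; and a perfect subset of the closed set `C` is perfect
in `X`, so `C` inherits the last clause of weirdness.
-/

open Filter Topology

section

variable {X Y : Type*} [TopologicalSpace X] [TopologicalSpace Y]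

theorem exists_isOpen_inter_eq_singleton_iff_not_accPt {S : Set X} {x : X} (hx : x ∈ S) :
    (∃ U : Set X, IsOpen U ∧ U ∩ S = {x}) ↔ ¬AccPt x (𝓟 S) := by
  rw [accPt_iff_nhds]
  constructor
  · rintro ⟨U, hU, hUS⟩ hacc
    have hxU : x ∈ U := (hUS.symm ▸ rfl : x ∈ U ∩ S).1
    obtain ⟨y, hy, hyx⟩ := hacc U (hU.mem_nhds hxU)
    exact hyx (hUS ▸ hy : y ∈ ({x} : Set X))
  · intro hacc
    push Not at hacc
    obtain ⟨U, hU, hUS⟩ := hacc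
    obtain ⟨V, hVU, hV, hxV⟩ := mem_nhds_iff.mp hU
    refine ⟨V, hV, Set.eq_singleton_iff_unique_mem.mpr ⟨⟨hxV, hx⟩, ?_⟩⟩
    exact fun y hy => hUS y ⟨hVU hy.1, hy.2⟩

theorem scatteredSpace_iff_forall_not_preperfect :
    ScatteredSpace X ↔ ∀ S : Set X, S.Nonempty → ¬Preperfect S := by
  refine forall_congr' fun S => imp_congr_right fun _ => ?_
  simp only [Preperfect, not_forall, exists_prop]
  exact exists_congr fun x => and_congr_right exists_isOpen_inter_eq_singleton_iff_not_accPt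

theorem exists_perfect_nonempty_of_not_scatteredSpace [T1Space X] (h : ¬ScatteredSpace X) :
    ∃ P : Set X, Perfect P ∧ P.Nonempty := by
  rw [scatteredSpace_iff_forall_not_preperfect] at h
  push Not at h
  obtain ⟨S, hne, hS⟩ := h
  exact ⟨closure S, hS.perfect_closure, hne.closure⟩

theorem PreconnectedSpace.not_scatteredSpace [T1Space X] [PreconnectedSpace X] [Nontrivial X] :
    ¬ScatteredSpace X := fun h =>
  (scatteredSpace_iff_forall_not_preperfect.mp h) _ Set.univ_nonempty
    (isPreconnected_univ.preperfect_of_nontrivial Set.nontrivial_univ)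

theorem Topology.IsClosedEmbedding.perfect_image {f : X → Y} (hf : IsClosedEmbedding f)
    {P : Set X} (hP : Perfect P) : Perfect (f '' P) where
  closed := hf.isClosedMap _ hP.closed
  acc := by
    rintro _ ⟨x, hx, rfl⟩
    simpa only [Filter.map_principal] using
      (hP.acc x hx).map hf.continuous.continuousAt hf.injective

theorem IsClosed.forall_perfect_not_isTotallyDisconnected {C : Set X} (hC : IsClosed C)
    (h : ∀ P : Set X, Perfect P → P.Nonempty → ¬IsTotallyDisconnected P) :
    ∀ P : Set C, Perfect P → P.Nonempty → ¬IsTotallyDisconnected P :=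
  fun _ hP hne htd => h _ (hC.isClosedEmbedding_subtypeVal.perfect_image hP) (hne.image _)
    (IsEmbedding.subtypeVal.isTotallyDisconnected_image.mpr htd)

theorem Weird.exists_connectedComponent_ne_singleton (hX : Weird X) :
    ∃ x : X, connectedComponent x ≠ {x} := by
  obtain ⟨-, -, hs, hp⟩ := hX
  by_contra! h
  -- this also makes `X` a T1 space: its singletons are components, hence closed
  have := totallyDisconnectedSpace_iff_connectedComponent_singleton.mpr h
  obtain ⟨P, hP, hne⟩ := exists_perfect_nonempty_of_not_scatteredSpace hs
  exact hp P hP hne (isTotallyDisconnected_of_totallyDisconnectedSpace P)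

theorem Weird.weird_connectedComponent (hX : Weird X) {x : X} (hx : connectedComponent x ≠ {x}) :
    Weird (connectedComponent x) := by
  obtain ⟨hc, ht, -, hp⟩ := hX
  have : Nontrivial (connectedComponent x) :=
    ((Set.nontrivial_iff_ne_singleton mem_connectedComponent).mpr hx).coe_sort
  have := Subtype.preconnectedSpace (isPreconnected_connectedComponent (x := x))
  exact ⟨isCompact_iff_compactSpace.mp isClosed_connectedComponent.isCompact, inferInstance,
    PreconnectedSpace.not_scatteredSpace,
    isClosed_connectedComponent.forall_perfect_not_isTotallyDisconnected hp⟩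

end

theorem stmt2 (X : Type*) [TopologicalSpace X] (hX : Weird X) :
    ∃ x : X, connectedComponent x ≠ {x} ∧
      Weird (connectedComponent x) ∧ IsConnected (connectedComponent x) := by
  obtain ⟨x, hx⟩ := hX.exists_connectedComponent_ne_singleton
  exact ⟨x, hx, hX.weird_connectedComponent hx, isConnected_connectedComponent⟩
end

section
/- No weird space is second countable. -/
open Filter Topology Set

/-- No point of the Cantor space is isolated. -/
lemma cantor_nhdsNE_neBot (x : ℕ → Bool) : (𝓝[≠] x).NeBot := by
  have h : Tendsto (fun n : ℕ => Function.update x n (!(x n))) atTop (𝓝[≠] x) := by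
    rw [tendsto_nhdsWithin_iff]
    constructor
    · rw [tendsto_pi_nhds]
      intro i
      apply tendsto_nhds_of_eventually_eq
      filter_upwards [eventually_gt_atTop i] with n hn
      exact Function.update_of_ne (by omega) _ _
    · filter_upwards with n
      intro h
      have := congrFun h n
      simp at this
  exact h.neBot

theorem stmt3 (X : Type*) [TopologicalSpace X] (hX : Weird X) :
    ¬ SecondCountableTopology X := by
  intro hsc
  obtain ⟨hcomp, ht2, hnsc, hnoP⟩ := hX
  -- Get a nonempty preperfect set
  rw [ScatteredSpace] at hnsc
  push_neg at hnsc
  obtain ⟨S, hSne, hS⟩ := hnsc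
  have hpre : Preperfect S := by
    intro x hx
    rw [accPt_iff_nhds]
    intro U hU
    by_contra hcon
    push_neg at hcon
    obtain ⟨V, hVU, hVopen, hxV⟩ := mem_nhds_iff.mp hU
    refine hS x hx V hVopen ?_
    apply Set.eq_singleton_iff_unique_mem.mpr
    refine ⟨⟨hxV, hx⟩, fun y hy => ?_⟩
    by_contra hne
    exact hne (hcon y ⟨hVU hy.1, hy.2⟩)
  have hCperf : Perfect (closure S) := hpre.perfect_closure
  have hCne : (closure S).Nonempty := hSne.closure
  -- upgrade to a complete metric space
  letI : MetricSpace X := TopologicalSpace.metrizableSpaceMetric X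
  haveI : CompleteSpace X := complete_of_compact
  obtain ⟨f, hfr, hfc, hfi⟩ := hCperf.exists_nat_bool_injection hCne
  have hemb : Topology.IsEmbedding f := (hfc.isClosedEmbedding hfi).toIsEmbedding
  have hKcl : IsClosed (range f) :=
    (isCompact_range hfc).isClosed
  have hKperf : Perfect (range f) := by
    refine ⟨hKcl, fun y hy => ?_⟩
    obtain ⟨x, rfl⟩ := hy
    have hne : (𝓝[≠] x).NeBot := cantor_nhdsNE_neBot x
    rw [AccPt]
    have hle : Filter.map f (𝓝[≠] x) ≤ 𝓝[≠] (f x) ⊓ 𝓟 (range f) := by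
      refine le_inf (le_inf ?_ ?_) ?_
      · exact le_trans (Filter.map_mono inf_le_left) (hfc.tendsto x)
      · refine le_trans (Filter.map_mono inf_le_right) ?_
        rw [Filter.map_principal]
        apply Filter.principal_mono.mpr
        rintro _ ⟨z, hz, rfl⟩
        simp only [mem_compl_iff, mem_singleton_iff] at hz ⊢
        exact fun h => hz (hfi h)
      · exact le_principal_iff.mpr (Filter.range_mem_map)
    exact Filter.neBot_of_le hle
  have hKtd : IsTotallyDisconnected (range f) :=
    hemb.isTotallyDisconnected_range.mpr inferInstance
  exact hnoP (range f) hKperf (range_nonempty f) hKtd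
end

section
/- No weird space is a compact linearly ordered topological space (LOTS). -/
open Set Filter Topology

theorem exists_preperfect_of_not_scatteredSpace {X : Type*} [TopologicalSpace X]
    (h : ¬ ScatteredSpace X) : ∃ S : Set X, S.Nonempty ∧ Preperfect S := by
  unfold ScatteredSpace at h
  push Not at h
  obtain ⟨S, hSne, hS⟩ := h
  refine ⟨S, hSne, preperfect_iff_nhds.2 fun x hx U hU => ?_⟩
  obtain ⟨V, hVU, hV, hxV⟩ := mem_nhds_iff.1 hU
  by_contra! hU'
  exact hS x hx V hV <| eq_singleton_iff_unique_mem.2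
    ⟨⟨hxV, hx⟩, fun y hy => hU' y ⟨hVU hy.1, hy.2⟩⟩

section OrderTopology

variable {X : Type*} [TopologicalSpace X] [LinearOrder X] [OrderTopology X]

theorem IsPreconnected.nonempty_Ioo {s : Set X} (hs : IsPreconnected s) {u v : X}
    (hu : u ∈ s) (hv : v ∈ s) (huv : u < v) : (Ioo u v).Nonempty := by
  obtain ⟨z, -, hzv, huz⟩ := hs (Iio v) (Ioi u) isOpen_Iio isOpen_Ioi
    (Iio_union_Ioi_of_lt huv ▸ subset_univ s) ⟨u, hu, huv⟩ ⟨v, hv, huv⟩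
  exact ⟨z, huz, hzv⟩

theorem isTotallyDisconnected_of_forall_exists_notMem {s : Set X}
    (h : ∀ x ∈ s, ∀ y ∈ s, x < y → ∃ z ∈ Ioo x y, z ∉ s) :
    IsTotallyDisconnected s := by
  intro t hts ht x hx y hy
  by_contra hne
  wlog hxy : x < y generalizing x y
  · exact this hy hx (Ne.symm hne) ((Ne.symm hne).lt_of_le (not_lt.1 hxy))
  obtain ⟨z, hz, hzs⟩ := h x (hts hx) y (hts hy) hxy
  exact hzs (hts (ht.Icc_subset hx hy (Ioo_subset_Icc_self hz)))

theorem accPt_principal_of_forall_Ioo_right {x b : X} {s : Set X} (hxb : x < b)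
    (h : ∀ w, x < w → w ≤ b → (Ioo x w ∩ s).Nonempty) : AccPt x (𝓟 s) := by
  rw [accPt_iff_frequently_nhdsNE]
  refine Frequently.filter_mono ?_ (nhdsGT_le_nhdsNE x)
  rw [(nhdsGT_basis_of_exists_gt ⟨b, hxb⟩).frequently_iff]
  intro w hxw
  obtain ⟨y, hy, hys⟩ := h (min w b) (lt_min hxw hxb) (min_le_right _ _)
  exact ⟨y, Ioo_subset_Ioo_right (min_le_left _ _) hy, hys⟩

theorem accPt_principal_of_forall_Ioo_left {a x : X} {s : Set X} (hax : a < x)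
    (h : ∀ w, w < x → a ≤ w → (Ioo w x ∩ s).Nonempty) : AccPt x (𝓟 s) :=
  accPt_principal_of_forall_Ioo_right (X := Xᵒᵈ) hax fun w hxw hwa =>
    let ⟨y, hy, hys⟩ := h w hxw hwa
    ⟨y, ⟨hy.2, hy.1⟩, hys⟩

end OrderTopology

section GapFamily

variable {X : Type*} [LinearOrder X] {a b : X} {G : Set (X × X)}

/-- A pair `I ∈ G` stands for the closed interval `[I.1, I.2]`; the open intervals
`(I.1, I.2)` are the gaps cut out of `[a, b]`. -/
def IsGapFamily (a b : X) (G : Set (X × X)) : Prop :=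
  (∀ I ∈ G, a < I.1 ∧ I.1 < I.2 ∧ I.2 < b) ∧
    G.Pairwise fun I J => Disjoint (Icc I.1 I.2) (Icc J.1 J.2)

def gaps (G : Set (X × X)) : Set X :=
  ⋃ I ∈ G, Ioo I.1 I.2

theorem mem_gaps {z : X} : z ∈ gaps G ↔ ∃ I ∈ G, z ∈ Ioo I.1 I.2 := by
  simp only [gaps, mem_iUnion, exists_prop]

theorem isOpen_gaps [TopologicalSpace X] [OrderTopology X] (G : Set (X × X)) :
    IsOpen (gaps G) :=
  isOpen_biUnion fun _ _ => isOpen_Ioo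

theorem exists_maximal_isGapFamily (a b : X) : ∃ G, Maximal (IsGapFamily a b) G := by
  refine zorn_subset {G | IsGapFamily a b G} fun c hc hchain => ⟨⋃₀ c, ⟨?_, ?_⟩,
    fun _ => subset_sUnion_of_mem⟩
  · rintro I ⟨G, hG, hI⟩
    exact (hc hG).1 I hI
  · rintro I ⟨G, hG, hI⟩ J ⟨G', hG', hJ⟩
    rcases hchain.total hG hG' with h | h
    · exact (hc hG').2 (h hI) hJ
    · exact (hc hG).2 hI (h hJ)

namespace IsGapFamily

theorem eq_of_mem_Icc (hG : IsGapFamily a b G) {I J : X × X} (hI : I ∈ G) (hJ : J ∈ G)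
    {z : X} (hzI : z ∈ Icc I.1 I.2) (hzJ : z ∈ Icc J.1 J.2) : I = J :=
  hG.2.eq hI hJ fun h => h.notMem_of_mem_left hzI hzJ

theorem fst_ne_snd (hG : IsGapFamily a b G) {I J : X × X} (hI : I ∈ G) (hJ : J ∈ G) :
    I.1 ≠ J.2 := by
  intro h
  have hJ₂ : I.1 ∈ Icc J.1 J.2 := by rw [h]; exact right_mem_Icc.2 (hG.1 J hJ).2.1.le
  obtain rfl := hG.eq_of_mem_Icc hI hJ (left_mem_Icc.2 (hG.1 I hI).2.1.le) hJ₂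
  exact (hG.1 I hI).2.1.ne h

theorem fst_mem_diff_gaps (hG : IsGapFamily a b G) {I : X × X} (hI : I ∈ G) :
    I.1 ∈ Icc a b \ gaps G := by
  obtain ⟨haI, hI₁₂, hIb⟩ := hG.1 I hI
  refine ⟨⟨haI.le, (hI₁₂.trans hIb).le⟩, fun h => ?_⟩
  obtain ⟨J, hJ, hIJ⟩ := mem_gaps.1 h
  obtain rfl := hG.eq_of_mem_Icc hI hJ (left_mem_Icc.2 hI₁₂.le) (Ioo_subset_Icc_self hIJ)
  exact hIJ.1.false

theorem snd_mem_diff_gaps (hG : IsGapFamily a b G) {I : X × X} (hI : I ∈ G) :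
    I.2 ∈ Icc a b \ gaps G := by
  obtain ⟨haI, hI₁₂, hIb⟩ := hG.1 I hI
  refine ⟨⟨(haI.trans hI₁₂).le, hIb.le⟩, fun h => ?_⟩
  obtain ⟨J, hJ, hIJ⟩ := mem_gaps.1 h
  obtain rfl := hG.eq_of_mem_Icc hI hJ (right_mem_Icc.2 hI₁₂.le) (Ioo_subset_Icc_self hIJ)
  exact hIJ.2.false

theorem left_mem_diff_gaps (hG : IsGapFamily a b G) (hab : a ≤ b) : a ∈ Icc a b \ gaps G :=
  ⟨left_mem_Icc.2 hab, fun h =>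
    let ⟨I, hI, haI⟩ := mem_gaps.1 h
    haI.1.not_gt (hG.1 I hI).1⟩

theorem disjoint_Icc_of_disjoint_gaps
    (hdense : ∀ u ∈ Icc a b, ∀ v ∈ Icc a b, u < v → (Ioo u v).Nonempty)
    (hG : IsGapFamily a b G) {u v : X} (hu : a ≤ u) (hv : v ≤ b)
    (hdisj : Disjoint (Ioo u v) (gaps G)) {I : X × X} (hI : I ∈ G) :
    Disjoint (Ioo u v) (Icc I.1 I.2) := by
  rw [disjoint_left]
  rintro z ⟨huz, hzv⟩ ⟨hIz, hzI⟩
  obtain ⟨haI, hI₁₂, hIb⟩ := hG.1 I hI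
  have huv : u < v := huz.trans hzv
  -- `(u, v) ∩ (I.1, I.2)` is a nonempty interval inside `(u, v) ∩ gaps G`
  have hlt : max u I.1 < min v I.2 := by
    simp only [max_lt_iff, lt_min_iff]
    exact ⟨⟨huv, hIz.trans_lt hzv⟩, huz.trans_le hzI, hI₁₂⟩
  obtain ⟨w, hw₁, hw₂⟩ := hdense (max u I.1)
    ⟨le_max_of_le_left hu, (hlt.le.trans (min_le_left _ _)).trans hv⟩
    (min v I.2) ⟨(le_max_of_le_left hu).trans hlt.le, min_le_of_left_le hv⟩ hlt
  exact hdisj.notMem_of_mem_left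
    ⟨(le_max_left _ _).trans_lt hw₁, hw₂.trans_le (min_le_left _ _)⟩
    (mem_gaps.2 ⟨I, hI, (le_max_right _ _).trans_lt hw₁, hw₂.trans_le (min_le_right _ _)⟩)

theorem nonempty_Ioo_inter_gaps_of_maximal
    (hdense : ∀ u ∈ Icc a b, ∀ v ∈ Icc a b, u < v → (Ioo u v).Nonempty)
    (hmax : Maximal (IsGapFamily a b) G) {u v : X} (hu : a ≤ u) (hv : v ≤ b) (huv : u < v) :
    (Ioo u v ∩ gaps G).Nonempty := by
  by_contra h
  rw [not_nonempty_iff_eq_empty, ← disjoint_iff_inter_eq_empty] at h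
  have hIcc : ∀ {z}, u ≤ z → z ≤ v → z ∈ Icc a b := fun huz hzv =>
    ⟨hu.trans huz, hzv.trans hv⟩
  obtain ⟨m, hm⟩ := hdense u (hIcc le_rfl huv.le) v (hIcc huv.le le_rfl) huv
  obtain ⟨d, hd⟩ := hdense m (hIcc hm.1.le hm.2.le) v (hIcc huv.le le_rfl) hm.2
  have hsub : Icc m d ⊆ Ioo u v := Icc_subset_Ioo hm.1 hd.2
  have hins : IsGapFamily a b (insert (m, d) G) := by
    refine ⟨?_, hmax.prop.2.insert fun I hI _ => ?_⟩
    · rintro I (rfl | hI)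
      · exact ⟨hu.trans_lt hm.1, hd.1, hd.2.trans_le hv⟩
      · exact hmax.prop.1 I hI
    · have := (disjoint_Icc_of_disjoint_gaps hdense hmax.prop hu hv h hI).mono_left hsub
      exact ⟨this, this.symm⟩
  obtain ⟨z, hz⟩ := hdense m (hIcc hm.1.le hm.2.le) d (hIcc (hm.1.trans hd.1).le hd.2.le) hd.1
  exact h.notMem_of_mem_left (hsub (Ioo_subset_Icc_self hz))
    (mem_gaps.2 ⟨_, hmax.mem_of_prop_insert hins, hz⟩)

theorem nonempty_Ioo_inter_diff_gaps_right
    (hdense : ∀ u ∈ Icc a b, ∀ v ∈ Icc a b, u < v → (Ioo u v).Nonempty)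
    (hG : IsGapFamily a b G) {x w : X} (hx : x ∈ Icc a b \ gaps G) (hxG : ∀ I ∈ G, I.1 ≠ x)
    (hxw : x < w) (hwb : w ≤ b) : (Ioo x w ∩ (Icc a b \ gaps G)).Nonempty := by
  obtain ⟨m, hm⟩ := hdense x hx.1 w ⟨hx.1.1.trans hxw.le, hwb⟩ hxw
  by_cases hmG : m ∈ gaps G
  · obtain ⟨I, hI, hmI⟩ := mem_gaps.1 hmG
    have hxI : x ≤ I.1 := not_lt.1 fun h => hx.2 (mem_gaps.2 ⟨I, hI, h, hm.1.trans hmI.2⟩)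
    exact ⟨I.1, ⟨hxI.lt_of_ne (hxG I hI).symm, hmI.1.trans hm.2⟩, hG.fst_mem_diff_gaps hI⟩
  · exact ⟨m, hm, ⟨hx.1.1.trans hm.1.le, hm.2.le.trans hwb⟩, hmG⟩

theorem nonempty_Ioo_inter_diff_gaps_left
    (hdense : ∀ u ∈ Icc a b, ∀ v ∈ Icc a b, u < v → (Ioo u v).Nonempty)
    (hG : IsGapFamily a b G) {x w : X} (hx : x ∈ Icc a b \ gaps G) (hxG : ∀ I ∈ G, I.2 ≠ x)
    (hwx : w < x) (haw : a ≤ w) : (Ioo w x ∩ (Icc a b \ gaps G)).Nonempty := by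
  obtain ⟨m, hm⟩ := hdense w ⟨haw, hwx.le.trans hx.1.2⟩ x hx.1 hwx
  by_cases hmG : m ∈ gaps G
  · obtain ⟨I, hI, hmI⟩ := mem_gaps.1 hmG
    have hIx : I.2 ≤ x := not_lt.1 fun h => hx.2 (mem_gaps.2 ⟨I, hI, hmI.1.trans hm.2, h⟩)
    exact ⟨I.2, ⟨hm.1.trans hmI.2, hIx.lt_of_ne (hxG I hI)⟩, hG.snd_mem_diff_gaps hI⟩
  · exact ⟨m, hm, ⟨haw.trans hm.1.le, hm.2.le.trans hx.1.2⟩, hmG⟩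

variable [TopologicalSpace X] [OrderTopology X]

theorem perfect_diff_gaps
    (hdense : ∀ u ∈ Icc a b, ∀ v ∈ Icc a b, u < v → (Ioo u v).Nonempty)
    (hG : IsGapFamily a b G) (hab : a < b) : Perfect (Icc a b \ gaps G) := by
  refine ⟨isClosed_Icc.sdiff (isOpen_gaps G), fun x hx => ?_⟩
  by_cases hleft : ∃ I ∈ G, I.1 = x
  · obtain ⟨I, hI, rfl⟩ := hleft
    exact accPt_principal_of_forall_Ioo_left (hG.1 I hI).1 fun w hwx haw =>
      nonempty_Ioo_inter_diff_gaps_left hdense hG hx (fun J hJ => (hG.fst_ne_snd hI hJ).symm)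
        hwx haw
  push Not at hleft
  rcases hx.1.2.lt_or_eq with hxb | rfl
  · exact accPt_principal_of_forall_Ioo_right hxb fun w hxw hwb =>
      nonempty_Ioo_inter_diff_gaps_right hdense hG hx hleft hxw hwb
  · exact accPt_principal_of_forall_Ioo_left hab fun w hwx haw =>
      nonempty_Ioo_inter_diff_gaps_left hdense hG hx (fun J hJ => (hG.1 J hJ).2.2.ne) hwx haw

theorem isTotallyDisconnected_diff_gaps_of_maximal
    (hdense : ∀ u ∈ Icc a b, ∀ v ∈ Icc a b, u < v → (Ioo u v).Nonempty)
    (hmax : Maximal (IsGapFamily a b) G) : IsTotallyDisconnected (Icc a b \ gaps G) :=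
  isTotallyDisconnected_of_forall_exists_notMem fun _ hx _ hy hxy =>
    let ⟨z, hz, hzG⟩ := nonempty_Ioo_inter_gaps_of_maximal hdense hmax hx.1.1 hy.1.2 hxy
    ⟨z, hz, fun h => h.2 hzG⟩

end IsGapFamily

theorem exists_perfect_isTotallyDisconnected_of_forall_nonempty_Ioo [TopologicalSpace X]
    [OrderTopology X] {a b : X} (hab : a < b)
    (hdense : ∀ u ∈ Icc a b, ∀ v ∈ Icc a b, u < v → (Ioo u v).Nonempty) :
    ∃ P : Set X, Perfect P ∧ P.Nonempty ∧ IsTotallyDisconnected P := by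
  obtain ⟨G, hmax⟩ := exists_maximal_isGapFamily a b
  exact ⟨_, hmax.prop.perfect_diff_gaps hdense hab, ⟨a, hmax.prop.left_mem_diff_gaps hab.le⟩,
    IsGapFamily.isTotallyDisconnected_diff_gaps_of_maximal hdense hmax⟩

end GapFamily

theorem stmt4_general (X : Type*) [TopologicalSpace X] [LinearOrder X] [OrderTopology X] :
    ¬ Weird X := by
  rintro ⟨-, -, hnotScattered, hweird⟩
  obtain ⟨S, hSne, hS⟩ := exists_preperfect_of_not_scatteredSpace hnotScattered
  obtain ⟨t, -, ht, hnt⟩ : ∃ t ⊆ closure S, IsPreconnected t ∧ ¬ t.Subsingleton := by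
    simpa [IsTotallyDisconnected] using hweird _ hS.perfect_closure hSne.closure
  obtain ⟨a, ha, b, hb, hab⟩ := (not_subsingleton_iff.1 hnt).exists_lt
  obtain ⟨P, hP, hPne, hPtd⟩ := exists_perfect_isTotallyDisconnected_of_forall_nonempty_Ioo hab
    fun u hu v hv huv => ht.nonempty_Ioo (ht.Icc_subset ha hb hu) (ht.Icc_subset ha hb hv) huv
  exact hweird P hP hPne hPtd

theorem stmt4 (X : Type*) [TopologicalSpace X] [LinearOrder X] [OrderTopology X]
    [CompactSpace X] : ¬ Weird X :=
  stmt4_general X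
end

section
/- If X is a weird space and f : X → Y is a continuous surjection onto a compact Hausdorff space Y, then either Y is weird or f⁻¹{y} is weird for some y ∈ Y. -/
open Topology in
/-- Subtype-level scatteredness yields isolated points for subsets, with open
sets taken in the ambient space. -/
lemma scatteredSet_of_scatteredSpace {X : Type*} [TopologicalSpace X] {A : Set X}
    (h : ScatteredSpace A) {S : Set X} (hSA : S ⊆ A) (hS : S.Nonempty) :
    ∃ x ∈ S, ∃ U : Set X, IsOpen U ∧ U ∩ S = {x} := by
  obtain ⟨s, hs⟩ := hS
  have hne : (Subtype.val ⁻¹' S : Set A).Nonempty := ⟨⟨s, hSA hs⟩, hs⟩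
  obtain ⟨⟨x, hxA⟩, hxS, U', hU'open, hU'⟩ := h _ hne
  obtain ⟨U, hUopen, hUeq⟩ := isOpen_induced_iff.mp hU'open
  refine ⟨x, hxS, U, hUopen, ?_⟩
  ext y
  constructor
  · rintro ⟨hyU, hyS⟩
    have : (⟨y, hSA hyS⟩ : A) ∈ U' ∩ (Subtype.val ⁻¹' S) := by
      constructor
      · rw [← hUeq]; exact hyU
      · exact hyS
    rw [hU'] at this
    simpa using congrArg Subtype.val this
  · intro hy
    rw [Set.mem_singleton_iff] at hy
    subst hy
    have hx : (⟨y, hxA⟩ : A) ∈ U' := by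
      have : (⟨y, hxA⟩ : A) ∈ ({⟨y, hxA⟩} : Set A) := rfl
      rw [← hU'] at this; exact this.1
    rw [← hUeq] at hx
    exact ⟨hx, hxS⟩

/-- A preconnected set which (if nonempty) has an isolated point is a
subsingleton (in a T1 space). -/
lemma subsingleton_of_preconnected_isolated {X : Type*} [TopologicalSpace X] [T1Space X]
    {t : Set X} (ht : IsPreconnected t)
    (h : t.Nonempty → ∃ x ∈ t, ∃ U : Set X, IsOpen U ∧ U ∩ t = {x}) : t.Subsingleton := by
  rcases t.eq_empty_or_nonempty with rfl | hne
  · exact Set.subsingleton_empty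
  obtain ⟨x, hxt, U, hUopen, hU⟩ := h hne
  have hxU : x ∈ U := by
    have : x ∈ ({x} : Set X) := rfl
    rw [← hU] at this; exact this.1
  intro a ha b hb
  by_contra hab
  have hz : ∃ z ∈ t, z ≠ x := by
    rcases eq_or_ne a x with rfl | hax
    · exact ⟨b, hb, fun hbx => hab hbx.symm⟩
    · exact ⟨a, ha, hax⟩
  obtain ⟨z, hzt, hzx⟩ := hz
  have := ht U ({x}ᶜ) hUopen isOpen_compl_singleton
    (by
      intro y hy
      rcases eq_or_ne y x with rfl | hyx
      · exact Or.inl hxU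
      · exact Or.inr hyx)
    ⟨x, hxt, hxU⟩ ⟨z, hzt, hzx⟩
  obtain ⟨w, hwt, hwU, hwx⟩ := this
  have : w ∈ U ∩ t := ⟨hwU, hwt⟩
  rw [hU] at this
  exact hwx this

open Topology in
/-- A perfect subset of a closed subspace is perfect in the ambient space. -/
lemma perfect_image_val {X : Type*} [TopologicalSpace X] {A : Set X} (hA : IsClosed A)
    {P : Set A} (hP : Perfect P) : Perfect (Subtype.val '' P) := by
  constructor
  · exact hA.isClosedEmbedding_subtypeVal.isClosedMap _ hP.closed
  · rw [preperfect_iff_nhds]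
    rintro _ ⟨x, hxP, rfl⟩ U hU
    have hU' : (Subtype.val ⁻¹' U : Set A) ∈ 𝓝 x := by
      rw [nhds_subtype_eq_comap]
      exact Filter.preimage_mem_comap hU
    obtain ⟨y, ⟨hyU, hyP⟩, hyx⟩ := (preperfect_iff_nhds.mp hP.acc) x hxP _ hU'
    exact ⟨y.1, ⟨hyU, Set.mem_image_of_mem _ hyP⟩, fun hy => hyx (Subtype.ext hy)⟩

open Topology in
theorem stmt5 (X Y : Type*) [TopologicalSpace X] [TopologicalSpace Y]
    [CompactSpace Y] [T2Space Y] (hX : Weird X)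
    (f : X → Y) (hf : Continuous f) (hsurj : Function.Surjective f) :
    Weird Y ∨ ∃ y : Y, Weird (f ⁻¹' {y}) := by
  obtain ⟨hXc, hXt2, hXns, hXnp⟩ := hX
  haveI := hXc; haveI := hXt2
  by_contra hcon
  push_neg at hcon
  obtain ⟨hnY, hnfib⟩ := hcon
  have hfib_closed : ∀ y : Y, IsClosed (f ⁻¹' {y}) := fun y =>
    (isClosed_singleton).preimage hf
  -- Step 1: every fiber is scattered.
  have hfib_scat : ∀ y : Y, ScatteredSpace (f ⁻¹' {y}) := by
    intro y
    haveI : CompactSpace (f ⁻¹' {y}) :=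
      isCompact_iff_compactSpace.mp ((hfib_closed y).isCompact)
    by_contra hns
    apply hnfib y
    refine ⟨inferInstance, inferInstance, hns, ?_⟩
    intro P hP hPne hPtd
    exact hXnp _ (perfect_image_val (hfib_closed y) hP) (hPne.image _)
      ((Topology.IsEmbedding.subtypeVal.isTotallyDisconnected_image).mpr hPtd)
  -- Step 2: Y is scattered, or Y has a nonempty perfect totally disconnected subset.
  have hY2 : ScatteredSpace Y ∨
      ∃ P : Set Y, Perfect P ∧ P.Nonempty ∧ IsTotallyDisconnected P := by
    by_contra h
    push_neg at h
    exact hnY ⟨inferInstance, inferInstance, h.1,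
      fun P hP hne htd => h.2 P hP hne htd⟩
  rcases hY2 with hYscat | ⟨P, hP, hPne, hPtd⟩
  · -- Case A: Y scattered + all fibers scattered ⇒ X scattered, contradiction.
    apply hXns
    intro S hS
    obtain ⟨y, hyfS, V, hVopen, hV⟩ := hYscat _ (hS.image f)
    have hyV : y ∈ V := by
      have : y ∈ ({y} : Set Y) := rfl
      rw [← hV] at this; exact this.1
    have hsub : S ∩ f ⁻¹' V ⊆ f ⁻¹' {y} := by
      rintro x ⟨hxS, hxV⟩
      have : f x ∈ V ∩ f '' S := ⟨hxV, Set.mem_image_of_mem f hxS⟩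
      rw [hV] at this
      exact this
    have hne : (S ∩ f ⁻¹' V).Nonempty := by
      obtain ⟨x, hxS, hfx⟩ := hyfS
      exact ⟨x, hxS, by rw [Set.mem_preimage, hfx]; exact hyV⟩
    obtain ⟨x, hxT, U, hUopen, hU⟩ :=
      scatteredSet_of_scatteredSpace (hfib_scat y) hsub hne
    refine ⟨x, hxT.1, U ∩ f ⁻¹' V, hUopen.inter (hVopen.preimage hf), ?_⟩
    rw [← hU]
    ext z
    constructor
    · rintro ⟨⟨hzU, hzV⟩, hzS⟩
      exact ⟨hzU, hzS, hzV⟩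
    · rintro ⟨hzU, hzS, hzV⟩
      exact ⟨⟨hzU, hzV⟩, hzS⟩
  · -- Case B: Y has a nonempty perfect totally disconnected subset P.
    -- Find a minimal closed subset M of f⁻¹(P) mapping onto P.
    set 𝒮 : Set (Set X) := {M | M ⊆ f ⁻¹' P ∧ IsClosed M ∧ P ⊆ f '' M} with h𝒮
    have htop : f ⁻¹' P ∈ 𝒮 :=
      ⟨le_refl _, hP.closed.preimage hf, (Set.image_preimage_eq P hsurj).symm.le⟩
    have hchainH : ∀ c ⊆ 𝒮, IsChain (· ⊆ ·) c → c.Nonempty →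
        ∃ lb ∈ 𝒮, ∀ s ∈ c, lb ⊆ s := by
      intro c hc𝒮 hchain hcne
      refine ⟨⋂₀ c, ⟨?_, ?_, ?_⟩, fun s hs => Set.sInter_subset_of_mem hs⟩
      · obtain ⟨M₀, hM₀⟩ := hcne
        exact (Set.sInter_subset_of_mem hM₀).trans (hc𝒮 hM₀).1
      · exact isClosed_sInter fun M hM => (hc𝒮 hM).2.1
      · intro p hp
        haveI : Nonempty c := hcne.to_subtype
        have key : (⋂ M : c, (M.1 ∩ f ⁻¹' {p})).Nonempty := by
          apply IsCompact.nonempty_iInter_of_directed_nonempty_isCompact_isClosed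
          · intro i j
            rcases hchain.total i.2 j.2 with hij | hij
            · exact ⟨i, le_refl _, Set.inter_subset_inter_left _ hij⟩
            · exact ⟨j, Set.inter_subset_inter_left _ hij, le_refl _⟩
          · intro i
            obtain ⟨x, hxM, hfx⟩ := (hc𝒮 i.2).2.2 hp
            exact ⟨x, hxM, hfx⟩
          · intro i
            exact (((hc𝒮 i.2).2.1).inter (isClosed_singleton.preimage hf)).isCompact
          · intro i
            exact ((hc𝒮 i.2).2.1).inter (isClosed_singleton.preimage hf)
        obtain ⟨x, hx⟩ := key
        simp only [Set.mem_iInter, Set.mem_inter_iff] at hx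
        refine ⟨x, ?_, ?_⟩
        · exact Set.mem_sInter.mpr fun M hM => (hx ⟨M, hM⟩).1
        · obtain ⟨i⟩ := (inferInstance : Nonempty c)
          exact (hx i).2
    obtain ⟨M, -, hM⟩ := zorn_superset_nonempty 𝒮 hchainH _ htop
    obtain ⟨hMP, hMclosed, hPM⟩ := hM.prop
    have hMcompact : IsCompact M := hMclosed.isCompact
    -- M is nonempty
    have hMne : M.Nonempty := by
      obtain ⟨p, hp⟩ := hPne
      obtain ⟨x, hxM, -⟩ := hPM hp
      exact ⟨x, hxM⟩
    -- M is perfect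
    have hMperf : Perfect M := by
      refine ⟨hMclosed, preperfect_iff_nhds.mpr ?_⟩
      intro x hxM U hU
      by_contra hcon2
      push_neg at hcon2
      obtain ⟨V, hVU, hVopen, hxV⟩ := mem_nhds_iff.mp hU
      have hVM : V ∩ M ⊆ {x} := by
        rintro z ⟨hzV, hzM⟩
        exact hcon2 z ⟨hVU hzV, hzM⟩
      set M' : Set X := M \ V with hM'def
      have hM'closed : IsClosed M' := hMclosed.sdiff hVopen
      have hM'image : ∀ q ∈ P, q ≠ f x → q ∈ f '' M' := by
        intro q hq hqfx
        obtain ⟨m, hmM, hfm⟩ := hPM hq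
        have hmx : m ≠ x := fun h => hqfx (by rw [← hfm, h])
        have hmV : m ∉ V := fun h => hmx (hVM ⟨h, hmM⟩)
        exact ⟨m, ⟨hmM, hmV⟩, hfm⟩
      have hM'𝒮 : M' ∈ 𝒮 := by
        refine ⟨(Set.diff_subset).trans hMP, hM'closed, ?_⟩
        intro q hq
        rcases eq_or_ne q (f x) with hq' | hqfx
        · -- q = f x : use that P is perfect and f '' M' is closed
          have hclosed' : IsClosed (f '' M') :=
            ((hMcompact.of_isClosed_subset hM'closed Set.diff_subset).image hf).isClosed
          have hsub' : P \ {q} ⊆ f '' M' := by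
            rintro q' ⟨hq'P, hq'q⟩
            exact hM'image q' hq'P (by rw [← hq']; exact hq'q)
          have hqcl : q ∈ closure (P \ {q}) := by
            rw [mem_closure_iff_nhds]
            intro W hW
            obtain ⟨z, ⟨hzW, hzP⟩, hzq⟩ := (preperfect_iff_nhds.mp hP.acc) q hq W hW
            exact ⟨z, hzW, hzP, hzq⟩
          have := (closure_minimal hsub' hclosed') hqcl
          exact this
        · exact hM'image q hq hqfx
      have : M ⊆ M' := hM.2 hM'𝒮 Set.diff_subset
      exact (this hxM).2 hxV
    -- M is totally disconnected
    have hMtd : IsTotallyDisconnected M := by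
      intro t htM htconn
      rcases t.eq_empty_or_nonempty with rfl | htne
      · exact Set.subsingleton_empty
      obtain ⟨x₀, hx₀⟩ := htne
      have himg : (f '' t).Subsingleton :=
        hPtd _ (by rintro _ ⟨z, hz, rfl⟩; exact hMP (htM hz))
          (htconn.image f hf.continuousOn)
      have htfib : t ⊆ f ⁻¹' {f x₀} := by
        intro z hz
        exact himg (Set.mem_image_of_mem f hz) (Set.mem_image_of_mem f hx₀)
      exact subsingleton_of_preconnected_isolated htconn
        (fun hne => scatteredSet_of_scatteredSpace (hfib_scat (f x₀)) htfib hne)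
    exact hXnp M hMperf hMne hMtd
end

section
/- If f : X → Y is a continuous surjection from a weird space X onto a compact Hausdorff space Y such that every fiber f⁻¹{y} is scattered, then Y is not scattered. -/
theorem stmt6 (X Y : Type*) [TopologicalSpace X] [TopologicalSpace Y]
    [CompactSpace Y] [T2Space Y] (hX : Weird X)
    (f : X → Y) (hf : Continuous f) (hsurj : Function.Surjective f)
    (hfib : ∀ y : Y, ScatteredSpace (f ⁻¹' {y})) :
    ¬ ScatteredSpace Y := by
  intro hYscat
  obtain ⟨_, _, hXnot, _⟩ := hX
  apply hXnot
  intro S hS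
  obtain ⟨y, hyS, V, hVopen, hV⟩ := hYscat (f '' S) (hS.image f)
  obtain ⟨x0, hx0S, hfx0⟩ := hyS
  set T : Set (f ⁻¹' {y}) := {z | (z : X) ∈ S} with hT
  have hTne : T.Nonempty := ⟨⟨x0, hfx0⟩, hx0S⟩
  obtain ⟨x, hxT, U', hU'open, hU'⟩ := hfib y T hTne
  obtain ⟨U, hUopen, hUeq⟩ := isOpen_induced_iff.mp hU'open
  have hyV : y ∈ V := by
    have : y ∈ V ∩ f '' S := hV ▸ rfl
    exact this.1
  refine ⟨(x : X), hxT, U ∩ f ⁻¹' V, hUopen.inter (hVopen.preimage hf), ?_⟩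
  ext z
  simp only [Set.mem_inter_iff, Set.mem_singleton_iff, Set.mem_preimage]
  constructor
  · rintro ⟨⟨hzU, hzV⟩, hzS⟩
    have hfz : f z = y := by
      have : f z ∈ V ∩ f '' S := ⟨hzV, ⟨z, hzS, rfl⟩⟩
      rw [hV] at this; exact this
    have hz : (⟨z, hfz⟩ : f ⁻¹' {y}) ∈ U' ∩ T := ⟨by rw [← hUeq]; exact hzU, hzS⟩
    rw [hU'] at hz
    exact congrArg Subtype.val hz
  · rintro rfl
    have hxU' : x ∈ U' := by
      have h : x ∈ U' ∩ T := by rw [hU']; rfl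
      exact h.1
    have hxU : (x : X) ∈ U := by rw [← hUeq] at hxU'; exact hxU'
    have hxV : f (x : X) ∈ V := by rw [x.prop]; exact hyV
    exact ⟨⟨hxU, hxV⟩, hxT⟩
end

section
/- If X ⊆ ∏_{j<ω} Z_j, where each Z_j is a compact Hausdorff space with no weird subspace, then X is not weird. -/
/-!
Suppose `X` were weird; not being scattered, it contains a nonempty perfect set `P`. If `f` is
continuous into a space without weird subspaces, every nonempty compact perfect `Q` contains a
nonempty perfect `R` with `f '' R` totally disconnected: if `f '' Q` is scattered, take the fibre
over an isolated point; otherwise take a minimal closed subset of `Q` mapping onto a perfect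
totally disconnected subset of `f '' Q`. Splitting such sets in two builds a Cantor scheme in `P`
whose pieces of level `n + 1` have totally disconnected images under the `n`-th projection. A
minimal closed set meeting every piece is perfect, and each of its connected subsets stays inside
one piece of every level, so it is totally disconnected, which contradicts weirdness of `X`.
-/

open Set Filter Topology Function

section Perfect

variable {α β : Type*} [TopologicalSpace α] [TopologicalSpace β]

theorem IsTotallyDisconnected.subset {s t : Set α} (ht : IsTotallyDisconnected t) (hst : s ⊆ t) :
    IsTotallyDisconnected s :=
  fun u hus hu => ht u (hus.trans hst) hu

theorem accPt_principal_iff_forall_isOpen_inter_ne_singleton {x : α} {S : Set α} (hx : x ∈ S) :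
    AccPt x (𝓟 S) ↔ ∀ U, IsOpen U → U ∩ S ≠ {x} := by
  rw [accPt_iff_nhds]
  constructor
  · intro h U hU hUS
    have hxU : x ∈ U := (hUS.symm ▸ mem_singleton x : x ∈ U ∩ S).1
    obtain ⟨y, hy, hyx⟩ := h U (hU.mem_nhds hxU)
    rw [hUS] at hy
    exact hyx hy
  · intro h V hV
    by_contra! hV'
    exact h (interior V) isOpen_interior <| eq_singleton_iff_unique_mem.2
      ⟨⟨mem_interior_iff_mem_nhds.2 hV, hx⟩, fun y hy => hV' y ⟨interior_subset hy.1, hy.2⟩⟩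

theorem not_scatteredSpace_iff : ¬ ScatteredSpace α ↔ ∃ S : Set α, Perfect S ∧ S.Nonempty := by
  simp only [ScatteredSpace, not_forall, not_exists, not_and, exists_prop]
  constructor
  · rintro ⟨S, hne, hS⟩
    exact ⟨closure S, Preperfect.perfect_closure fun x hx =>
      (accPt_principal_iff_forall_isOpen_inter_ne_singleton hx).2 (hS x hx), hne.closure⟩
  · rintro ⟨S, hS, hne⟩
    exact ⟨S, hne, fun x hx => (accPt_principal_iff_forall_isOpen_inter_ne_singleton hx).1
      (hS.acc x hx)⟩

theorem Topology.IsEmbedding.preperfect_image {f : α → β} (hf : IsEmbedding f) {s : Set α} :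
    Preperfect (f '' s) ↔ Preperfect s := by
  constructor
  · intro h x hx
    rw [accPt_iff_nhds]
    intro U hU
    obtain ⟨V, hV, hVU⟩ := (hf.nhds_eq_comap x ▸ hU : U ∈ comap f (𝓝 (f x)))
    obtain ⟨_, ⟨hyV, y, hy, rfl⟩, hyx⟩ :=
      accPt_iff_nhds.1 (h (f x) (mem_image_of_mem f hx)) V hV
    exact ⟨y, ⟨hVU hyV, hy⟩, ne_of_apply_ne f hyx⟩
  · rintro h _ ⟨x, hx, rfl⟩
    simpa only [map_principal] using (h x hx).map hf.continuous.continuousAt hf.injective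

theorem Topology.IsClosedEmbedding.perfect_image_s8 {f : α → β} (hf : IsClosedEmbedding f)
    {s : Set α} : Perfect (f '' s) ↔ Perfect s :=
  ⟨fun h => ⟨hf.isClosed_iff_image_isClosed.2 h.closed, hf.isEmbedding.preperfect_image.1 h.acc⟩,
    fun h => ⟨hf.isClosed_iff_image_isClosed.1 h.closed, hf.isEmbedding.preperfect_image.2 h.acc⟩⟩

theorem weird_iff [T2Space α] {Y : Set α} :
    Weird Y ↔ IsCompact Y ∧ (∃ P ⊆ Y, Perfect P ∧ P.Nonempty) ∧
      ∀ P ⊆ Y, Perfect P → P.Nonempty → ¬ IsTotallyDisconnected P := by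
  rw [Weird, ← isCompact_iff_compactSpace, iff_of_true (a := T2Space Y) inferInstance trivial,
    true_and, not_scatteredSpace_iff]
  refine and_congr_right fun hY => ?_
  have hval := hY.isClosed.isClosedEmbedding_subtypeVal
  have hrange : Y = range ((↑) : Y → α) := Subtype.range_coe.symm
  conv_rhs => rw [hrange]
  simp only [exists_subset_range_and_iff, forall_subset_range_iff, hval.perfect_image_s8,
    image_nonempty, hval.isEmbedding.isTotallyDisconnected_image]

end Perfect

section MinimalClosed

variable {α ι : Type*} [TopologicalSpace α]

theorem IsClosed.diff_singleton_of_not_accPt {m : Set α} (hm : IsClosed m) {x : α}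
    (hx : ¬ AccPt x (𝓟 m)) : IsClosed (m \ {x}) := by
  rw [accPt_principal_iff_nhdsWithin, ← mem_closure_iff_nhdsWithin_neBot] at hx
  exact isClosed_of_closure_subset fun y hy =>
    ⟨closure_minimal sdiff_subset hm hy, fun hyx => hx ((mem_singleton_iff.1 hyx) ▸ hy)⟩

theorem IsCompact.exists_minimal_isClosed_inter_nonempty {K : Set α} (hK : IsCompact K)
    (hKc : IsClosed K) {A : ι → Set α} (hA : ∀ i, IsClosed (A i))
    (hKA : ∀ i, (K ∩ A i).Nonempty) :
    ∃ m ⊆ K, Minimal (fun L => IsClosed L ∧ ∀ i, (L ∩ A i).Nonempty) m := by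
  let S := {L | L ⊆ K ∧ IsClosed L ∧ ∀ i, (L ∩ A i).Nonempty}
  have hchain : ∀ c ⊆ S, IsChain (· ⊆ ·) c → c.Nonempty → ∃ lb ∈ S, ∀ L ∈ c, lb ⊆ L := by
    rintro c hc hchain ⟨L₀, hL₀⟩
    refine ⟨⋂₀ c, ⟨(sInter_subset_of_mem hL₀).trans (hc hL₀).1,
      isClosed_sInter fun L hL => (hc hL).2.1, fun i => ?_⟩, fun L hL => sInter_subset_of_mem hL⟩
    have : Nonempty c := ⟨⟨L₀, hL₀⟩⟩
    rw [sInter_eq_iInter, iInter_inter]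
    refine IsCompact.nonempty_iInter_of_directed_nonempty_isCompact_isClosed _ ?_
      (fun L => (hc L.2).2.2 i)
      (fun L => (hK.of_isClosed_subset (hc L.2).2.1 (hc L.2).1).inter_right (hA i))
      (fun L => (hc L.2).2.1.inter (hA i))
    intro L L'
    rcases hchain.total L.2 L'.2 with h | h
    · exact ⟨L, subset_rfl, inter_subset_inter_left _ h⟩
    · exact ⟨L', inter_subset_inter_left _ h, subset_rfl⟩
  obtain ⟨m, hmK, hm⟩ := zorn_superset_nonempty S hchain K ⟨subset_rfl, hKc, hKA⟩
  exact ⟨m, hmK, hm.prop.2, fun L hL hLm => hm.le_of_le ⟨hLm.trans hmK, hL⟩ hLm⟩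

theorem Minimal.exists_inter_eq_singleton_of_not_accPt {A : ι → Set α} {m : Set α}
    (hm : Minimal (fun L => IsClosed L ∧ ∀ i, (L ∩ A i).Nonempty) m) {x : α} (hx : x ∈ m)
    (hacc : ¬ AccPt x (𝓟 m)) : ∃ i, m ∩ A i = {x} := by
  obtain ⟨i, hi⟩ : ∃ i, ¬ ((m \ {x}) ∩ A i).Nonempty := by
    by_contra! h
    exact (hm.le_of_le ⟨hm.prop.1.diff_singleton_of_not_accPt hacc, h⟩ sdiff_subset hx).2 rfl
  refine ⟨i, eq_singleton_iff_nonempty_unique_mem.2 ⟨hm.prop.2 i, fun y hy => ?_⟩⟩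
  by_contra hyx
  exact hi ⟨y, ⟨hy.1, hyx⟩, hy.2⟩

end MinimalClosed

section Image

variable {α β : Type*} [TopologicalSpace α] [TopologicalSpace β] {f : α → β}

theorem Perfect.inter_preimage_singleton_of_not_accPt [T1Space β] (hf : Continuous f)
    {Q : Set α} (hQ : Perfect Q) {y : β} (hy : ¬ AccPt y (𝓟 (f '' Q))) :
    Perfect (Q ∩ f ⁻¹' {y}) := by
  rw [accPt_iff_nhds] at hy
  push Not at hy
  obtain ⟨U, hU, hUy⟩ := hy
  have hfibre : Q ∩ f ⁻¹' {y} = f ⁻¹' interior U ∩ Q := by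
    ext x
    constructor
    · rintro ⟨hxQ, rfl⟩
      exact ⟨mem_interior_iff_mem_nhds.2 hU, hxQ⟩
    · rintro ⟨hxU, hxQ⟩
      exact ⟨hxQ, hUy (f x) ⟨interior_subset hxU, mem_image_of_mem f hxQ⟩⟩
  refine ⟨hQ.closed.inter (isClosed_singleton.preimage hf), ?_⟩
  rw [hfibre]
  exact hQ.acc.open_inter (isOpen_interior.preimage hf)

theorem Perfect.exists_perfect_image_eq [T2Space β] (hf : Continuous f) {K : Set α}
    (hK : IsCompact K) (hKc : IsClosed K) {T : Set β} (hT : Perfect T) (hTK : T ⊆ f '' K) :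
    ∃ L ⊆ K, Perfect L ∧ f '' L = T := by
  have hKT : ∀ t : T, (K ∩ f ⁻¹' T ∩ f ⁻¹' {(t : β)}).Nonempty := fun t => by
    obtain ⟨x, hxK, hxt⟩ := hTK t.2
    exact ⟨x, ⟨hxK, by simp [hxt]⟩, hxt⟩
  obtain ⟨m, hmK, hm⟩ :=
    (hK.inter_right (hT.closed.preimage hf)).exists_minimal_isClosed_inter_nonempty
      (hKc.inter (hT.closed.preimage hf)) (fun t => isClosed_singleton.preimage hf) hKT
  have himage : f '' m = T := subset_antisymm (image_subset_iff.2 (hmK.trans inter_subset_right))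
    fun t ht => (hm.prop.2 ⟨t, ht⟩).imp fun _ hx => ⟨hx.1, hx.2⟩
  refine ⟨m, hmK.trans inter_subset_left, ⟨hm.prop.1, fun x hx => ?_⟩, himage⟩
  by_contra hacc
  obtain ⟨t, ht⟩ := hm.exists_inter_eq_singleton_of_not_accPt hx hacc
  have hxt : f x = t := (ht.symm ▸ mem_singleton x : x ∈ m ∩ f ⁻¹' {(t : β)}).2
  -- `x` is the only point of `m` over `t`, so the closed set `f '' (m \ {x})` covers `T \ {t}`
  -- but misses `t`, contradicting that `t` is not isolated in `T`.
  have hclosed : IsClosed (f '' (m \ {x})) :=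
    ((hK.of_isClosed_subset (hm.prop.1.diff_singleton_of_not_accPt hacc)
      (sdiff_subset.trans (hmK.trans inter_subset_left))).image hf).isClosed
  have ht_not : (t : β) ∉ f '' (m \ {x}) := by
    rintro ⟨y, ⟨hym, hyx⟩, hyt⟩
    exact hyx (ht.subset ⟨hym, hyt⟩)
  obtain ⟨t', ⟨ht'U, ht'T⟩, ht't⟩ :=
    accPt_iff_nhds.1 (hT.acc t t.2) _ (hclosed.isOpen_compl.mem_nhds ht_not)
  obtain ⟨y, hym, rfl⟩ := himage.symm ▸ ht'T
  exact ht'U ⟨y, ⟨hym, fun hyx => ht't ((mem_singleton_iff.1 hyx) ▸ hxt)⟩, rfl⟩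

theorem Perfect.exists_perfect_subset_isTotallyDisconnected_image [T2Space β]
    (hf : Continuous f) {Q : Set α} (hQ : Perfect Q) (hQc : IsCompact Q) (hQne : Q.Nonempty)
    (hweird : ¬ Weird (f '' Q)) :
    ∃ R ⊆ Q, Perfect R ∧ R.Nonempty ∧ IsTotallyDisconnected (f '' R) := by
  rw [weird_iff, not_and, not_and_or] at hweird
  rcases hweird (hQc.image hf) with hscattered | htd
  · obtain ⟨_, ⟨x, hxQ, rfl⟩, hx⟩ : ∃ y ∈ f '' Q, ¬ AccPt y (𝓟 (f '' Q)) := by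
      by_contra! h
      exact hscattered ⟨f '' Q, subset_rfl, ⟨(hQc.image hf).isClosed, h⟩, hQne.image f⟩
    refine ⟨Q ∩ f ⁻¹' {f x}, inter_subset_left, hQ.inter_preimage_singleton_of_not_accPt hf hx,
      ⟨x, hxQ, rfl⟩, (isTotallyDisconnected_singleton (x := f x)).subset ?_⟩
    exact image_subset_iff.2 inter_subset_right
  · push Not at htd
    obtain ⟨T, hTQ, hT, hTne, hTtd⟩ := htd
    obtain ⟨R, hRQ, hR, rfl⟩ := hT.exists_perfect_image_eq hf hQc hQ.closed hTQ
    exact ⟨R, hRQ, hR, hTne.of_image, hTtd⟩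

end Image

theorem IsPreconnected.exists_subset_of_subset_biUnion {α ι : Type*} [TopologicalSpace α]
    {t : Set α} (ht : IsPreconnected t) (htne : t.Nonempty) {I : Set ι} (hI : I.Finite)
    {A : ι → Set α} (hA : ∀ i ∈ I, IsClosed (A i)) (hdisj : I.PairwiseDisjoint A)
    (htA : t ⊆ ⋃ i ∈ I, A i) : ∃ i ∈ I, t ⊆ A i := by
  obtain ⟨x, hx⟩ := htne
  obtain ⟨i, hi, hxi⟩ := mem_iUnion₂.1 (htA hx)
  refine ⟨i, hi, ?_⟩
  have hrest : IsClosed (⋃ j ∈ I \ {i}, A j) :=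
    hI.sdiff.isClosed_biUnion fun j hj => hA j hj.1
  have hdisj' : Disjoint (A i) (⋃ j ∈ I \ {i}, A j) :=
    disjoint_iUnion₂_right.2 fun j hj => hdisj hi hj.1 (Ne.symm hj.2)
  have hcover : t ⊆ A i ∪ ⋃ j ∈ I \ {i}, A j := by
    intro y hy
    obtain ⟨j, hj, hyj⟩ := mem_iUnion₂.1 (htA hy)
    by_cases hji : j = i
    · exact Or.inl (hji ▸ hyj)
    · exact Or.inr (mem_biUnion ⟨hj, hji⟩ hyj)
  refine (isPreconnected_iff_subset_of_disjoint_closed.1 ht _ _ (hA i hi) hrest hcover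
    (by rw [hdisj'.inter_eq, inter_empty])).resolve_right fun h => ?_
  exact hdisj'.notMem_of_mem_left hxi (h hx)

section CantorScheme

variable {α : Type*} [TopologicalSpace α]

def IsPerfectSplitting (C : ℕ → Set α → Bool → Set α) : Prop :=
  ∀ n Q, Perfect Q → Q.Nonempty →
    (∀ b, C n Q b ⊆ Q ∧ Perfect (C n Q b) ∧ (C n Q b).Nonempty) ∧
      Disjoint (C n Q false) (C n Q true)

/-- Lists are read from the head: `b :: s` indexes the `b`-half of the piece `s`, cut by the
splitting of level `s.length`. -/
def cantorScheme (C : ℕ → Set α → Bool → Set α) (P : Set α) : List Bool → Set α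
  | [] => P
  | b :: s => C s.length (cantorScheme C P s) b

variable {C : ℕ → Set α → Bool → Set α} {P : Set α}

theorem cantorScheme_perfect (hC : IsPerfectSplitting C) (hP : Perfect P) (hPne : P.Nonempty) :
    ∀ s, Perfect (cantorScheme C P s) ∧ (cantorScheme C P s).Nonempty
  | [] => ⟨hP, hPne⟩
  | b :: s =>
    have h := cantorScheme_perfect hC hP hPne s
    ((hC _ _ h.1 h.2).1 b).2

theorem cantorScheme_cons_subset (hC : IsPerfectSplitting C) (hP : Perfect P)
    (hPne : P.Nonempty) (b : Bool) (s : List Bool) :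
    cantorScheme C P (b :: s) ⊆ cantorScheme C P s :=
  have h := cantorScheme_perfect hC hP hPne s
  ((hC _ _ h.1 h.2).1 b).1

theorem cantorScheme_append_subset (hC : IsPerfectSplitting C) (hP : Perfect P)
    (hPne : P.Nonempty) (u s : List Bool) :
    cantorScheme C P (u ++ s) ⊆ cantorScheme C P s := by
  induction u with
  | nil => exact subset_rfl
  | cons b u ih => exact (cantorScheme_cons_subset hC hP hPne b _).trans ih

theorem cantorScheme_subset (hC : IsPerfectSplitting C) (hP : Perfect P) (hPne : P.Nonempty)
    (s : List Bool) : cantorScheme C P s ⊆ P := by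
  simpa [cantorScheme] using cantorScheme_append_subset hC hP hPne s []

theorem exists_cantorScheme_superset (hC : IsPerfectSplitting C) (hP : Perfect P)
    (hPne : P.Nonempty) {n : ℕ} {s : List Bool} (hn : n ≤ s.length) :
    ∃ s', s'.length = n ∧ cantorScheme C P s ⊆ cantorScheme C P s' := by
  refine ⟨s.drop (s.length - n), by simp; omega, ?_⟩
  simpa using cantorScheme_append_subset hC hP hPne (s.take (s.length - n)) (s.drop (s.length - n))

theorem cantorScheme_disjoint (hC : IsPerfectSplitting C) (hP : Perfect P) (hPne : P.Nonempty) :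
    ∀ s t : List Bool, s.length = t.length → s ≠ t →
      Disjoint (cantorScheme C P s) (cantorScheme C P t)
  | [], [], _, hst => absurd rfl hst
  | a :: s, b :: t, hlen, hst => by
    have hlen : s.length = t.length := by simpa using hlen
    by_cases hst' : s = t
    · subst hst'
      have h := cantorScheme_perfect hC hP hPne s
      have hdisj := (hC s.length _ h.1 h.2).2
      cases a <;> cases b
      · exact absurd rfl hst
      · exact hdisj
      · exact hdisj.symm
      · exact absurd rfl hst
    · exact (cantorScheme_disjoint hC hP hPne s t hlen hst').mono
        (cantorScheme_cons_subset hC hP hPne a s) (cantorScheme_cons_subset hC hP hPne b t)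

theorem cantorScheme_pairwiseDisjoint (hC : IsPerfectSplitting C) (hP : Perfect P)
    (hPne : P.Nonempty) (n : ℕ) :
    {s : List Bool | s.length = n}.PairwiseDisjoint (cantorScheme C P) :=
  fun s hs t ht hst => cantorScheme_disjoint hC hP hPne s t (hs.trans ht.symm) hst

theorem exists_perfect_subset_forall_isPreconnected_subset_cantorScheme
    (hC : IsPerfectSplitting C) (hP : Perfect P) (hPc : IsCompact P) (hPne : P.Nonempty) :
    ∃ m ⊆ P, Perfect m ∧ m.Nonempty ∧ ∀ t ⊆ m, IsPreconnected t → t.Nonempty →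
      ∀ n, ∃ s : List Bool, s.length = n ∧ t ⊆ cantorScheme C P s := by
  have hpiece := cantorScheme_perfect hC hP hPne
  have hlevel : ∀ n, IsClosed (⋃ s ∈ {s : List Bool | s.length = n}, cantorScheme C P s) :=
    fun n => (List.finite_length_eq Bool n).isClosed_biUnion fun s _ => (hpiece s).1.closed
  obtain ⟨m, hmP, hm⟩ := hPc.exists_minimal_isClosed_inter_nonempty hP.closed
    (fun s => (hpiece s).1.closed)
    (fun s => (hpiece s).2.mono (subset_inter (cantorScheme_subset hC hP hPne s) subset_rfl))
  have hm_level : ∀ n, m ⊆ ⋃ s ∈ {s : List Bool | s.length = n}, cantorScheme C P s := by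
    intro n x hx
    -- `m ∩ level n` still meets each piece `s`, inside its subpiece `replicate n false ++ s`.
    refine (hm.le_of_le ⟨hm.prop.1.inter (hlevel n), fun s => ?_⟩ inter_subset_left hx).2
    obtain ⟨s', hs', hsub⟩ := exists_cantorScheme_superset hC hP hPne (n := n)
      (s := List.replicate n false ++ s) (by simp)
    obtain ⟨y, hym, hy⟩ := hm.prop.2 (List.replicate n false ++ s)
    exact ⟨y, ⟨hym, mem_biUnion hs' (hsub hy)⟩, cantorScheme_append_subset hC hP hPne _ _ hy⟩
  have hm_preperfect : Preperfect m := by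
    intro x hx
    by_contra hacc
    obtain ⟨s, hs⟩ := hm.exists_inter_eq_singleton_of_not_accPt hx hacc
    -- Both halves of the piece `s` meet `m`, inside `m ∩ cantorScheme C P s = {x}`.
    obtain ⟨y₀, hy₀m, hy₀⟩ := hm.prop.2 (false :: s)
    obtain ⟨y₁, hy₁m, hy₁⟩ := hm.prop.2 (true :: s)
    have h₀ : y₀ ∈ ({x} : Set α) := hs ▸ ⟨hy₀m, cantorScheme_cons_subset hC hP hPne _ _ hy₀⟩
    have h₁ : y₁ ∈ ({x} : Set α) := hs ▸ ⟨hy₁m, cantorScheme_cons_subset hC hP hPne _ _ hy₁⟩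
    exact (cantorScheme_disjoint hC hP hPne (false :: s) (true :: s) rfl (by simp)).ne_of_mem
      hy₀ hy₁ (h₀.trans h₁.symm)
  refine ⟨m, hmP, ⟨hm.prop.1, hm_preperfect⟩, (hm.prop.2 []).mono inter_subset_left,
    fun t htm ht htne n => ?_⟩
  exact ht.exists_subset_of_subset_biUnion htne (List.finite_length_eq Bool n)
    (fun s _ => (hpiece s).1.closed) (cantorScheme_pairwiseDisjoint hC hP hPne n)
    (htm.trans (hm_level n))

end CantorScheme

theorem exists_perfect_isTotallyDisconnected_of_forall_not_weird {α : Type*}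
    [TopologicalSpace α] [CompactSpace α] [T2Space α] {β : ℕ → Type*}
    [∀ n, TopologicalSpace (β n)] [∀ n, T2Space (β n)] (hβ : ∀ n (S : Set (β n)), ¬ Weird S)
    {f : ∀ n, α → β n} (hf : ∀ n, Continuous (f n)) (hinj : Injective fun x n => f n x)
    {P : Set α} (hP : Perfect P) (hPne : P.Nonempty) :
    ∃ m ⊆ P, Perfect m ∧ m.Nonempty ∧ IsTotallyDisconnected m := by
  have hsplit : ∀ n (Q : Set α), ∃ D : Bool → Set α, Perfect Q → Q.Nonempty →
      (∀ b, (D b ⊆ Q ∧ Perfect (D b) ∧ (D b).Nonempty) ∧ IsTotallyDisconnected (f n '' D b)) ∧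
        Disjoint (D false) (D true) := by
    intro n Q
    by_cases hQ : Perfect Q ∧ Q.Nonempty
    · obtain ⟨R, hRQ, hR, hRne, hRtd⟩ := hQ.1.exists_perfect_subset_isTotallyDisconnected_image
        (hf n) hQ.1.closed.isCompact hQ.2 (hβ n _)
      obtain ⟨C₀, C₁, ⟨hC₀, hC₀ne, hC₀R⟩, ⟨hC₁, hC₁ne, hC₁R⟩, hdisj⟩ := hR.splitting hRne
      refine ⟨fun b => cond b C₁ C₀, fun _ _ => ⟨fun b => ?_, hdisj⟩⟩
      cases b
      · exact ⟨⟨hC₀R.trans hRQ, hC₀, hC₀ne⟩, hRtd.subset (image_mono hC₀R)⟩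
      · exact ⟨⟨hC₁R.trans hRQ, hC₁, hC₁ne⟩, hRtd.subset (image_mono hC₁R)⟩
    · exact ⟨fun _ => ∅, fun hQ' hQne => absurd ⟨hQ', hQne⟩ hQ⟩
  choose C hC using hsplit
  have hC' : IsPerfectSplitting C := fun n Q hQ hQne =>
    ⟨fun b => ((hC n Q hQ hQne).1 b).1, (hC n Q hQ hQne).2⟩
  obtain ⟨m, hmP, hm, hmne, hm_pieces⟩ :=
    exists_perfect_subset_forall_isPreconnected_subset_cantorScheme hC' hP hP.closed.isCompact hPne
  refine ⟨m, hmP, hm, hmne, fun t htm ht x hx y hy => hinj (funext fun n => ?_)⟩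
  -- A preconnected `t ⊆ m` lies in a single piece `b :: s` of level `n + 1`, whose image under
  -- `f n` is totally disconnected.
  obtain ⟨_ | ⟨b, s⟩, hs, hts⟩ := hm_pieces t htm ht ⟨x, hx⟩ (n + 1)
  · simp at hs
  obtain rfl : s.length = n := by simpa using hs
  have hpiece := cantorScheme_perfect hC' hP hPne s
  exact ((hC _ _ hpiece.1 hpiece.2).1 b).2 _ (image_mono hts) (ht.image _ (hf _).continuousOn)
    (mem_image_of_mem _ hx) (mem_image_of_mem _ hy)

theorem stmt8 (Z : ℕ → Type*) [∀ j, TopologicalSpace (Z j)]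
    [∀ j, CompactSpace (Z j)] [∀ j, T2Space (Z j)]
    (hZ : ∀ j, ∀ S : Set (Z j), ¬ Weird S)
    (X : Set (∀ j, Z j)) : ¬ Weird X := by
  intro hX
  obtain ⟨-, ⟨P, hPX, hP, hPne⟩, hX⟩ := weird_iff.1 hX
  obtain ⟨m, hmP, hm, hmne, hmtd⟩ := exists_perfect_isTotallyDisconnected_of_forall_not_weird hZ
    (f := fun n x => x n) (fun n => continuous_apply n) injective_id hP hPne
  exact hX m (hmP.trans hPX) hm hmne hmtd
end

section
/- Let X be compact Hausdorff and A a closed subalgebra of C(X,ℂ) containing constants. Then the collection of peak sets with respect to A is closed under countable intersections. -/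
/-- `H` is a peak set with respect to the function algebra `A ⊆ C(X, ℂ)`:
there is `f ∈ A` vanishing on `H` with `Re f > 0` off `H`. -/
def IsPeakSet {X : Type*} [TopologicalSpace X] (A : Set C(X, ℂ)) (H : Set X) : Prop :=
  IsClosed H ∧ ∃ f ∈ A, (∀ x ∈ H, f x = 0) ∧ ∀ x ∉ H, 0 < (f x).re

theorem stmt10 (X : Type*) [TopologicalSpace X] [CompactSpace X] [T2Space X]
    (A : Subalgebra ℂ C(X, ℂ)) (hA : IsClosed (A : Set C(X, ℂ)))
    (H : ℕ → Set X) (h : ∀ n, IsPeakSet (A : Set C(X, ℂ)) (H n)) :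
    IsPeakSet (A : Set C(X, ℂ)) (⋂ n, H n) := by
  choose hHcl f hfA hf0 hfpos using h
  -- normalizing constants
  set c : ℕ → ℝ := fun n => (1/2)^n / (1 + ‖f n‖) with hc
  have hcpos : ∀ n, 0 < c n := by
    intro n
    apply div_pos (pow_pos (by norm_num) n)
    positivity
  set g : ℕ → C(X, ℂ) := fun n => (c n : ℂ) • f n with hg
  have hgA : ∀ n, g n ∈ A := fun n => A.smul_mem (hfA n) _
  have hgnorm : ∀ n, ‖g n‖ ≤ (1/2)^n := by
    intro n
    rw [hg, norm_smul]
    simp only [Complex.norm_real, Real.norm_eq_abs, abs_of_pos (hcpos n)]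
    rw [hc, div_mul_eq_mul_div, div_le_iff₀ (by positivity)]
    nlinarith [norm_nonneg (f n), pow_pos (show (0:ℝ) < 1/2 by norm_num) n]
  have hgsum : Summable g := by
    apply Summable.of_norm
    exact Summable.of_nonneg_of_le (fun n => norm_nonneg _) hgnorm
      (summable_geometric_of_lt_one (by norm_num) (by norm_num))
  set S : C(X, ℂ) := ∑' n, g n with hS
  have hHS : HasSum g S := hgsum.hasSum
  -- S ∈ A
  have hSA : S ∈ A := by
    refine hA.mem_of_tendsto hHS ?_
    filter_upwards with s
    exact A.toSubmodule.sum_mem (fun n _ => hgA n)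
  -- pointwise sums
  have hptw : ∀ x : X, HasSum (fun n => g n x) (S x) := by
    intro x
    exact hHS.mapL (ContinuousMap.evalCLM ℂ x)
  have hre : ∀ x : X, HasSum (fun n => (g n x).re) ((S x).re) := by
    intro x
    exact (hptw x).mapL Complex.reCLM
  refine ⟨isClosed_iInter (fun n => hHcl n), S, hSA, ?_, ?_⟩
  · intro x hx
    have : ∀ n, g n x = 0 := by
      intro n
      simp only [hg, ContinuousMap.smul_apply, smul_eq_mul]
      rw [hf0 n x (Set.mem_iInter.mp hx n), mul_zero]
    rw [← (hptw x).tsum_eq]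
    simp [this]
  · intro x hx
    obtain ⟨n₀, hn₀⟩ : ∃ n, x ∉ H n := by
      by_contra hcon
      push_neg at hcon
      exact hx (Set.mem_iInter.mpr hcon)
    have hterm : ∀ n, 0 ≤ (g n x).re := by
      intro n
      simp only [hg, ContinuousMap.smul_apply, smul_eq_mul]
      rw [Complex.mul_re]
      simp only [Complex.ofReal_re, Complex.ofReal_im, zero_mul, sub_zero]
      by_cases hxH : x ∈ H n
      · rw [hf0 n x hxH]; simp
      · exact le_of_lt (mul_pos (hcpos n) (hfpos n x hxH))
    have hpos : 0 < (g n₀ x).re := by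
      simp only [hg, ContinuousMap.smul_apply, smul_eq_mul]
      rw [Complex.mul_re]
      simp only [Complex.ofReal_re, Complex.ofReal_im, zero_mul, sub_zero]
      exact mul_pos (hcpos n₀) (hfpos n₀ x hn₀)
    rw [← (hre x).tsum_eq]
    exact Summable.tsum_pos (hre x).summable hterm n₀ hpos
end

section
/- Let X be compact Hausdorff and A a closed subalgebra of C(X,ℂ) containing constants. Then the union of two peak sets with respect to A is a peak set with respect to A. -/
open scoped ENNReal

namespace Complex

lemma abs_im_le_re_of_re_sq_nonneg {s : ℂ} (hs : 0 ≤ s.re) (h : 0 ≤ (s ^ 2).re) :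
    |s.im| ≤ s.re :=
  abs_le_of_sq_le_sq (by rw [sq, mul_re] at h; nlinarith) hs

lemma abs_im_lt_re_of_re_sq_pos {s : ℂ} (hs : 0 ≤ s.re) (h : 0 < (s ^ 2).re) :
    |s.im| < s.re :=
  abs_lt_of_sq_lt_sq (by rw [sq, mul_re] at h; nlinarith) hs

lemma re_mul_pos_of_abs_im_lt_re {s t : ℂ} (hs : |s.im| < s.re) (ht : |t.im| < t.re) :
    0 < (s * t).re := by
  have hprod : |s.im| * |t.im| < s.re * t.re :=
    mul_lt_mul'' hs ht (abs_nonneg _) (abs_nonneg _)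
  rw [mul_re]
  linarith [le_abs_self (s.im * t.im), abs_mul s.im t.im]

lemma norm_sub_le_norm_add_of_abs_im_le_re {s t : ℂ} (hs : |s.im| ≤ s.re)
    (ht : |t.im| ≤ t.re) : ‖s - t‖ ≤ ‖s + t‖ := by
  have hprod : |s.im| * |t.im| ≤ s.re * t.re :=
    mul_le_mul hs ht (abs_nonneg _) ((abs_nonneg _).trans hs)
  rw [← sq_le_sq₀ (norm_nonneg _) (norm_nonneg _), Complex.sq_norm, Complex.sq_norm,
    normSq_apply, normSq_apply]
  simp only [sub_re, sub_im, add_re, add_im]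
  nlinarith [neg_abs_le (s.im * t.im), abs_mul s.im t.im]

lemma re_cpow_inv_two_nonneg (z : ℂ) : 0 ≤ (z ^ (2⁻¹ : ℂ)).re := by
  have h := cpow_ofReal_re z 2⁻¹
  push_cast at h
  rw [h]
  have := neg_pi_lt_arg z
  have := arg_le_pi z
  exact mul_nonneg (by positivity)
    (Real.cos_nonneg_of_neg_pi_div_two_le_of_le (by linarith) (by linarith))

lemma abs_im_cpow_inv_two_le_re {z : ℂ} (hz : 0 ≤ z.re) :
    |(z ^ (2⁻¹ : ℂ)).im| ≤ (z ^ (2⁻¹ : ℂ)).re :=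
  abs_im_le_re_of_re_sq_nonneg (re_cpow_inv_two_nonneg z) (by rwa [cpow_ofNat_inv_pow])

lemma abs_im_cpow_inv_two_lt_re {z : ℂ} (hz : 0 < z.re) :
    |(z ^ (2⁻¹ : ℂ)).im| < (z ^ (2⁻¹ : ℂ)).re :=
  abs_im_lt_re_of_re_sq_pos (re_cpow_inv_two_nonneg z) (by rwa [cpow_ofNat_inv_pow])

lemma norm_cpow_inv_two_sub_le {z w : ℂ} (hz : 0 ≤ z.re) (hw : 0 ≤ w.re) :
    ‖z ^ (2⁻¹ : ℂ) - w ^ (2⁻¹ : ℂ)‖ ≤ √‖z - w‖ := by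
  set s := z ^ (2⁻¹ : ℂ)
  set t := w ^ (2⁻¹ : ℂ)
  have hst : ‖s - t‖ ≤ ‖s + t‖ := norm_sub_le_norm_add_of_abs_im_le_re
    (abs_im_cpow_inv_two_le_re hz) (abs_im_cpow_inv_two_le_re hw)
  have hmul : ‖s - t‖ * ‖s + t‖ = ‖z - w‖ := by
    rw [← norm_mul, show (s - t) * (s + t) = s ^ 2 - t ^ 2 by ring, cpow_ofNat_inv_pow,
      cpow_ofNat_inv_pow]
  refine Real.le_sqrt_of_sq_le ?_
  nlinarith [norm_nonneg (s - t)]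

lemma re_one_sub_nonneg_of_norm_le_one {v : ℂ} (hv : ‖v‖ ≤ 1) : 0 ≤ (1 - v).re := by
  rw [sub_re, one_re, sub_nonneg]
  exact (re_le_norm v).trans hv

lemma norm_inv_one_add_le_one {w : ℂ} (hw : 0 ≤ w.re) : ‖(1 + w)⁻¹‖ ≤ 1 := by
  have : 1 ≤ ‖1 + w‖ := by simpa using (re_le_norm (1 + w)).trans' (by simpa using hw)
  rw [norm_inv]
  exact inv_le_one_of_one_le₀ this

lemma re_one_sub_inv_one_add_pos {w : ℂ} (hw : 0 < w.re) : 0 < (1 - (1 + w)⁻¹).re := by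
  have hlt : 1 < ‖1 + w‖ := by simpa using (re_le_norm (1 + w)).trans_lt' (by simpa using hw)
  rw [sub_re, one_re, sub_pos]
  refine (re_le_norm _).trans_lt ?_
  rw [norm_inv]
  exact inv_lt_one_of_one_lt₀ hlt

lemma norm_one_sub_cpow_inv_two_sub_le {v : ℂ} (hv : ‖v‖ ≤ 1) {ε : ℝ} (hε0 : 0 ≤ ε)
    (hε1 : ε ≤ 1) :
    ‖(1 - v) ^ (2⁻¹ : ℂ) - (1 - ((1 - ε : ℝ) : ℂ) * v) ^ (2⁻¹ : ℂ)‖ ≤ √ε := by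
  have hεv : ‖((1 - ε : ℝ) : ℂ) * v‖ ≤ 1 - ε := by
    rw [norm_mul, norm_real, Real.norm_of_nonneg (sub_nonneg.2 hε1)]
    exact mul_le_of_le_one_right (by linarith) hv
  refine (norm_cpow_inv_two_sub_le (re_one_sub_nonneg_of_norm_le_one hv)
    (re_one_sub_nonneg_of_norm_le_one (hεv.trans (by linarith)))).trans
    (Real.sqrt_le_sqrt ?_)
  rw [show (1 - v) - (1 - ((1 - ε : ℝ) : ℂ) * v) = -((ε : ℝ) : ℂ) * v by push_cast; ring,
    norm_mul, norm_neg, norm_real, Real.norm_of_nonneg hε0]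
  exact mul_le_of_le_one_right hε0 hv

end Complex

open Complex

namespace Subalgebra

variable {X : Type*} [TopologicalSpace X] [CompactSpace X] {A : Subalgebra ℂ C(X, ℂ)}

theorem exists_apply_eq_of_hasFPowerSeriesOnBall (hA : IsClosed (A : Set C(X, ℂ)))
    {φ : ℂ → ℂ} {p : FormalMultilinearSeries ℂ ℂ ℂ} {r : ℝ≥0∞}
    (hφ : HasFPowerSeriesOnBall φ p 0 r) {b : C(X, ℂ)} (hb : b ∈ A) (hbr : ‖b‖ₑ < r) :
    ∃ g ∈ A, ∀ x, g x = φ (b x) := by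
  have hterm : ∀ n, ‖p.coeff n • b ^ n‖ ≤ ‖p n‖ * ‖b‖ ^ n := fun n => by
    refine (norm_smul_le _ _).trans (mul_le_mul ?_ ?_ (norm_nonneg _) (norm_nonneg _))
    · rw [p.norm_apply_eq_norm_coef]
    · refine (ContinuousMap.norm_le _ (by positivity)).2 fun x => ?_
      rw [ContinuousMap.pow_apply, norm_pow]
      exact pow_le_pow_left₀ (norm_nonneg _) (b.norm_coe_le_norm x) n
  have hsum : Summable fun n => p.coeff n • b ^ n :=
    .of_norm_bounded (p.summable_norm_mul_pow (hbr.trans_le hφ.r_le)) hterm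
  refine ⟨∑' n, p.coeff n • b ^ n, hA.mem_of_tendsto hsum.hasSum
    (.of_forall fun s => A.sum_mem fun n _ => A.smul_mem (A.pow_mem hb n) _), fun x => ?_⟩
  have hx : b x ∈ Metric.eball (0 : ℂ) r := by
    rw [Metric.mem_eball, edist_zero_right]
    exact lt_of_le_of_lt (by simpa [enorm, ← NNReal.coe_le_coe] using b.norm_coe_le_norm x) hbr
  refine (ContinuousMap.hasSum_apply hsum.hasSum x).unique ?_
  simpa [p.apply_eq_pow_smul_coeff, mul_comm] using hφ.hasSum hx

theorem exists_apply_eq_inv_one_add (hA : IsClosed (A : Set C(X, ℂ))) {b : C(X, ℂ)}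
    (hb : b ∈ A) (hb1 : ‖b‖ < 1) : ∃ u ∈ A, ∀ x, u x = (1 + b x)⁻¹ := by
  obtain ⟨u, hu, hux⟩ := exists_apply_eq_of_hasFPowerSeriesOnBall hA
    (one_add_cpow_hasFPowerSeriesOnBall_zero (a := -1)) hb
    (by simpa [enorm, ← NNReal.coe_lt_coe] using hb1)
  exact ⟨u, hu, fun x => by rw [hux, cpow_neg_one]⟩

theorem exists_apply_eq_one_sub_cpow_inv_two (hA : IsClosed (A : Set C(X, ℂ)))
    {u : C(X, ℂ)} (hu : u ∈ A) (hu1 : ‖u‖ ≤ 1) :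
    ∃ g ∈ A, ∀ x, g x = (1 - u x) ^ (2⁻¹ : ℂ) := by
  have hre : ∀ x, 0 ≤ (1 - u x).re := fun x =>
    re_one_sub_nonneg_of_norm_le_one ((u.norm_coe_le_norm x).trans hu1)
  let g : C(X, ℂ) := ⟨fun x => (1 - u x) ^ (2⁻¹ : ℂ), continuous_iff_continuousAt.2 fun x =>
    (continuousAt_cpow_const_of_re_pos (w := 2⁻¹) (.inl (hre x)) (by norm_num)).comp
      (f := fun x => 1 - u x) (by fun_prop)⟩
  refine ⟨g, hA.closure_subset <| Metric.mem_closure_iff.2 fun δ hδ => ?_, fun x => rfl⟩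
  set ε := min 1 ((δ / 2) ^ 2)
  have hε : 0 < ε := by positivity
  have hε1 : ε ≤ 1 := min_le_left _ _
  set c : ℂ := ((1 - ε : ℝ) : ℂ)
  have hcu : ‖-(c • u)‖ < 1 := by
    rw [norm_neg, norm_smul, norm_real, Real.norm_of_nonneg (sub_nonneg.2 hε1)]
    nlinarith [norm_nonneg u]
  obtain ⟨s, hs, hsx⟩ := exists_apply_eq_of_hasFPowerSeriesOnBall hA
    (one_add_cpow_hasFPowerSeriesOnBall_zero (a := 2⁻¹)) (A.neg_mem (A.smul_mem hu c))
    (by simpa [enorm, ← NNReal.coe_lt_coe] using hcu)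
  have hdist : dist g s ≤ √ε := (ContinuousMap.dist_le (Real.sqrt_nonneg _)).2 fun x => by
    rw [dist_eq_norm, show s x = (1 - c * u x) ^ (2⁻¹ : ℂ) by simp [hsx, sub_eq_add_neg]]
    exact norm_one_sub_cpow_inv_two_sub_le ((u.norm_coe_le_norm x).trans hu1) hε.le hε1
  refine ⟨s, hs, hdist.trans_lt ?_⟩
  calc √ε ≤ √((δ / 2) ^ 2) := Real.sqrt_le_sqrt (min_le_right _ _)
    _ = δ / 2 := Real.sqrt_sq (by positivity)
    _ < δ := by linarith

end Subalgebra

theorem IsPeakSet.exists_peak_function_abs_im_lt_re {X : Type*} [TopologicalSpace X]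
    [CompactSpace X] {A : Subalgebra ℂ C(X, ℂ)} (hA : IsClosed (A : Set C(X, ℂ))) {H : Set X}
    (hH : IsPeakSet (A : Set C(X, ℂ)) H) :
    ∃ g ∈ A, (∀ x ∈ H, g x = 0) ∧ ∀ x ∉ H, |(g x).im| < (g x).re := by
  obtain ⟨-, f, hf, hfH, hfpos⟩ := hH
  have hfre : ∀ x, 0 ≤ (f x).re := fun x => by
    by_cases hx : x ∈ H
    · simp [hfH x hx]
    · exact (hfpos x hx).le
  set k : ℝ := (1 + ‖f‖)⁻¹
  have hk : 0 < k := by positivity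
  have hkf : ‖(k : ℂ) • f‖ < 1 := by
    rw [norm_smul, norm_real, Real.norm_of_nonneg hk.le, inv_mul_lt_one₀ (by positivity)]
    linarith [norm_nonneg f]
  obtain ⟨u, hu, hux⟩ := Subalgebra.exists_apply_eq_inv_one_add hA (A.smul_mem hf (k : ℂ)) hkf
  have hu1 : ‖u‖ ≤ 1 := (ContinuousMap.norm_le _ zero_le_one).2 fun x => by
    rw [hux]
    exact norm_inv_one_add_le_one (by simpa using mul_nonneg hk.le (hfre x))
  obtain ⟨g, hg, hgx⟩ := Subalgebra.exists_apply_eq_one_sub_cpow_inv_two hA hu hu1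
  refine ⟨g, hg, fun x hx => ?_, fun x hx => ?_⟩
  · simp [hgx, hux, hfH x hx]
  · rw [hgx, hux]
    exact abs_im_cpow_inv_two_lt_re
      (re_one_sub_inv_one_add_pos (by simpa using mul_pos hk (hfpos x hx)))

theorem stmt11_general (X : Type*) [TopologicalSpace X] [CompactSpace X]
    (A : Subalgebra ℂ C(X, ℂ)) (hA : IsClosed (A : Set C(X, ℂ)))
    (H₀ H₁ : Set X) (h₀ : IsPeakSet (A : Set C(X, ℂ)) H₀)
    (h₁ : IsPeakSet (A : Set C(X, ℂ)) H₁) :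
    IsPeakSet (A : Set C(X, ℂ)) (H₀ ∪ H₁) := by
  obtain ⟨g₀, hg₀, hg₀H, hg₀pos⟩ := h₀.exists_peak_function_abs_im_lt_re hA
  obtain ⟨g₁, hg₁, hg₁H, hg₁pos⟩ := h₁.exists_peak_function_abs_im_lt_re hA
  refine ⟨h₀.1.union h₁.1, g₀ * g₁, A.mul_mem hg₀ hg₁, ?_, fun x hx => ?_⟩
  · rintro x (hx | hx)
    · simp [hg₀H x hx]
    · simp [hg₁H x hx]
  · rw [Set.mem_union, not_or] at hx
    exact re_mul_pos_of_abs_im_lt_re (hg₀pos x hx.1) (hg₁pos x hx.2)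

theorem stmt11 (X : Type*) [TopologicalSpace X] [CompactSpace X] [T2Space X]
    (A : Subalgebra ℂ C(X, ℂ)) (hA : IsClosed (A : Set C(X, ℂ)))
    (H₀ H₁ : Set X) (h₀ : IsPeakSet (A : Set C(X, ℂ)) H₀)
    (h₁ : IsPeakSet (A : Set C(X, ℂ)) H₁) :
    IsPeakSet (A : Set C(X, ℂ)) (H₀ ∪ H₁) :=
  stmt11_general X A hA H₀ H₁ h₀ h₁
end

section
/- For the disc algebra D on the closed unit disc, a point p is a peak point iff |p| = 1. -/
/-- For the disc algebra on the closed unit disc, `p` is a peak point iff `|p| = 1`. -/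
theorem stmt13 (p : ℂ) (hp : p ∈ Metric.closedBall (0 : ℂ) 1) :
    (∃ f : ℂ → ℂ, ContinuousOn f (Metric.closedBall (0 : ℂ) 1) ∧
        DifferentiableOn ℂ f (Metric.ball (0 : ℂ) 1) ∧ f p = 0 ∧
        ∀ x ∈ Metric.closedBall (0 : ℂ) 1, x ≠ p → 0 < (f x).re) ↔
      ‖p‖ = 1 := by
  simp only [Metric.mem_closedBall, dist_zero_right] at hp
  constructor
  · rintro ⟨f, hc, hd, hfp, hpos⟩
    by_contra habs
    have hplt : ‖p‖ < 1 := lt_of_le_of_ne hp habs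
    have hpball : p ∈ Metric.ball (0 : ℂ) 1 := by
      simpa [Metric.mem_ball, Complex.norm_def] using hplt
    -- Re f ≥ 0 on the closed ball
    have hre : ∀ x ∈ Metric.closedBall (0 : ℂ) 1, 0 ≤ (f x).re := by
      intro x hx
      rcases eq_or_ne x p with rfl | hne
      · simp [hfp]
      · exact (hpos x hx hne).le
    set g : ℂ → ℂ := fun x => Complex.exp (-f x) with hg
    have hgd : DifferentiableOn ℂ g (Metric.ball (0 : ℂ) 1) := hd.neg.cexp
    have hmax : IsMaxOn (norm ∘ g) (Metric.ball (0 : ℂ) 1) p := by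
      intro x hx
      have hx' : x ∈ Metric.closedBall (0 : ℂ) 1 := Metric.ball_subset_closedBall hx
      simp only [Function.comp, hg, Complex.norm_exp, Complex.neg_re,
        Set.mem_setOf_eq, hfp, Complex.zero_re, neg_zero, Real.exp_zero]
      exact Real.exp_le_one_iff.mpr (by linarith [hre x hx'])
    have heq := Complex.eqOn_of_isPreconnected_of_isMaxOn_norm
      (convex_ball (0 : ℂ) 1).isPreconnected Metric.isOpen_ball hgd hpball hmax
    -- pick another point in the ball
    obtain ⟨q, hqball, hqne⟩ : ∃ q, q ∈ Metric.ball (0 : ℂ) 1 ∧ q ≠ p := by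
      rcases eq_or_ne p 0 with rfl | hp0
      · exact ⟨(1 : ℂ) / 2, by norm_num [Metric.mem_ball], by norm_num⟩
      · exact ⟨0, by norm_num [Metric.mem_ball], (Ne.symm hp0)⟩
    have hgq : g q = g p := heq hqball
    have hnorm : Real.exp (-(f q).re) = 1 := by
      have := congrArg norm hgq
      simpa [hg, Complex.norm_exp, hfp] using this
    have : (f q).re = 0 := by
      have h0 : Real.exp (-(f q).re) = Real.exp 0 := by rw [hnorm, Real.exp_zero]
      have := Real.exp_injective h0
      linarith
    have := hpos q (Metric.ball_subset_closedBall hqball) hqne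
    linarith
  · intro habs
    refine ⟨fun x => 1 - (starRingEnd ℂ) p * x, ?_, ?_, ?_, ?_⟩
    · fun_prop
    · fun_prop
    · show 1 - (starRingEnd ℂ) p * p = 0
      have : (starRingEnd ℂ) p * p = ((Complex.normSq p : ℝ) : ℂ) := by
        rw [mul_comm, Complex.mul_conj]
      rw [this]
      have : Complex.normSq p = 1 := by
        rw [Complex.normSq_eq_norm_sq, habs]; norm_num
      rw [this]; norm_num
    · intro x hx hne
      simp only [Metric.mem_closedBall, dist_zero_right] at hx
      set z : ℂ := (starRingEnd ℂ) p * x with hz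
      have hzabs : ‖z‖ ≤ 1 := by
        rw [hz, norm_mul, Complex.norm_conj, habs, one_mul]; exact hx
      have hrez : z.re ≤ 1 := le_trans (Complex.re_le_norm z) hzabs
      have : z.re < 1 := by
        rcases lt_or_eq_of_le hrez with h | h
        · exact h
        · exfalso
          -- z.re = 1, |z| ≤ 1 forces z = 1, hence x = p
          have him : z.im = 0 := by
            have h1 : z.re ^ 2 + z.im ^ 2 ≤ 1 := by
              have := Complex.sq_norm z
              nlinarith [Complex.normSq_apply z, Complex.sq_norm z, hzabs,
                norm_nonneg z]
            nlinarith
          have hz1 : z = 1 := by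
            apply Complex.ext <;> simp [← h, him]
          have hx_eq : x = p := by
            have hpc : p * (starRingEnd ℂ) p = 1 := by
              rw [Complex.mul_conj, Complex.normSq_eq_norm_sq, habs]; norm_num
            calc x = (p * (starRingEnd ℂ) p) * x := by rw [hpc, one_mul]
            _ = p * z := by rw [hz]; ring
            _ = p := by rw [hz1, mul_one]
          exact hne hx_eq
      show 0 < (1 - (starRingEnd ℂ) p * x).re
      have hzz : ((starRingEnd ℂ) p * x).re = z.re := rfl
      rw [Complex.sub_re, Complex.one_re, hzz]
      linarith
end

section
/- Let α = ξ + iη with 0 < η ≤ ξ, and let z = x + iy with 0 < −x < y (i.e., z lies in the sector V = {x + iy : 0 < −x < y}). Then for B_α(z) = (z − α)/(z − conj(α)), one has 1 > |B_α(z)|² ≥ 1 − 4η/ξ. -/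
theorem stmt15 (ξ η x y : ℝ) (hη : 0 < η) (hηξ : η ≤ ξ)
    (hx : 0 < -x) (hxy : -x < y)
    (α z : ℂ) (hα : α = ⟨ξ, η⟩) (hz : z = ⟨x, y⟩)
    (B : ℂ) (hB : B = (z - α) / (z - starRingEnd ℂ α)) :
    ‖B‖ ^ 2 < 1 ∧ 1 - 4 * η / ξ ≤ ‖B‖ ^ 2 := by
  have hy : 0 < y := lt_trans hx hxy
  have hξ : 0 < ξ := lt_of_lt_of_le hη hηξ
  have hD : 0 < (x - ξ)^2 + (y + η)^2 := by positivity
  have habs : ‖B‖ ^ 2 = ((x - ξ)^2 + (y - η)^2) / ((x - ξ)^2 + (y + η)^2) := by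
    rw [hB, Complex.sq_norm, map_div₀ Complex.normSq]
    subst hα hz
    simp [Complex.normSq_apply, Complex.ext_iff]
    ring_nf
  rw [habs]
  constructor
  · rw [div_lt_one hD]
    nlinarith [sq_nonneg (x - ξ)]
  · have key : y * ξ ≤ (x - ξ)^2 + (y + η)^2 := by
      rcases le_total y ξ with h | h
      · nlinarith [sq_nonneg (y + η)]
      · nlinarith [sq_nonneg (x - ξ)]
    rw [sub_le_iff_le_add, div_add_div _ _ (ne_of_gt hD) (ne_of_gt hξ), le_div_iff₀ (by positivity)]
    nlinarith
end

section
/- If X is compact, connected, Hausdorff, and infinite, and U ⊆ X is a nonempty open set, then there is a closed K ⊆ U such that K is connected and infinite. -/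
open Set

/-- In a compact T2 space, if the connected component of `y` is disjoint from a closed
set `C`, then some clopen set containing `y` is disjoint from `C`. -/
lemma aux_clopen {Y : Type*} [TopologicalSpace Y] [CompactSpace Y] [T2Space Y]
    (y : Y) {C : Set Y} (hC : IsClosed C) (hd : Disjoint (connectedComponent y) C) :
    ∃ s : Set Y, IsClopen s ∧ y ∈ s ∧ Disjoint s C := by
  have H1 := hC.isCompact.inter_iInter_nonempty
    (fun s : { s : Set Y // IsClopen s ∧ y ∈ s } => (s : Set Y)) (fun s => s.2.1.1)
  rw [← not_disjoint_iff_nonempty_inter, imp_not_comm, not_forall] at H1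
  obtain ⟨si, H2⟩ := H1 (by
    rw [← connectedComponent_eq_iInter_isClopen]
    exact hd.symm)
  refine ⟨⋂ U ∈ si, (U : Set Y), ?_, ?_, ?_⟩
  · exact isClopen_biInter_finset fun s _ => s.2.1
  · exact mem_iInter₂.2 fun s _ => s.2.2
  · rw [not_nonempty_iff_eq_empty, inter_comm] at H2
    exact disjoint_iff_inter_eq_empty.mpr H2

theorem stmt16 (X : Type*) [TopologicalSpace X] [CompactSpace X] [T2Space X]
    [ConnectedSpace X] (hinf : Infinite X)
    (U : Set X) (hU : IsOpen U) (hne : U.Nonempty) :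
    ∃ K : Set X, K ⊆ U ∧ IsClosed K ∧ IsConnected K ∧ K.Infinite := by
  obtain ⟨p, hp⟩ := hne
  obtain ⟨V, hVopen, hpV, hVU⟩ :=
    normal_exists_closure_subset isClosed_singleton hU (singleton_subset_iff.2 hp)
  have hpV : p ∈ V := hpV rfl
  set F : Set X := closure V with hF
  have hFclosed : IsClosed F := isClosed_closure
  have : CompactSpace F := isCompact_iff_compactSpace.1 hFclosed.isCompact
  set q : F := ⟨p, subset_closure hpV⟩ with hq
  by_cases hcase : (connectedComponent q : Set F) ⊆ Subtype.val ⁻¹' V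
  · -- the component lies in V; produce a clopen set, so U = univ
    obtain ⟨s, hsclopen, hqs, hsd⟩ := aux_clopen q
      (C := (Subtype.val ⁻¹' V)ᶜ)
      (isOpen_compl_iff.1 (by simpa using (hVopen.preimage continuous_subtype_val)))
      (by rwa [disjoint_compl_right_iff_subset])
    rw [disjoint_compl_right_iff_subset] at hsd
    have hclosedim : IsClosed (Subtype.val '' s : Set X) :=
      hFclosed.isClosedEmbedding_subtypeVal.isClosedMap _ hsclopen.isClosed
    have hsubV : (Subtype.val '' s : Set X) ⊆ V := by
      rintro _ ⟨x, hx, rfl⟩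
      exact hsd hx
    have hopenim : IsOpen (Subtype.val '' s : Set X) := by
      obtain ⟨O, hO, hOs⟩ := hsclopen.isOpen
      have heq : (Subtype.val '' s : Set X) = O ∩ V := by
        apply Subset.antisymm
        · rintro _ ⟨x, hx, rfl⟩
          refine ⟨?_, hsd hx⟩
          rw [← hOs] at hx
          exact hx
        · rintro x ⟨hxO, hxV⟩
          exact ⟨⟨x, subset_closure hxV⟩, by rw [← hOs]; exact hxO, rfl⟩
      rw [heq]
      exact hO.inter hVopen
    have huniv : (Subtype.val '' s : Set X) = univ :=
      (isClopen_iff.1 ⟨hclosedim, hopenim⟩).resolve_left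
        (Nonempty.ne_empty ⟨q, q, hqs, rfl⟩)
    have hUuniv : U = univ :=
      eq_univ_of_univ_subset ((huniv ▸ hsubV).trans (subset_closure.trans hVU))
    exact ⟨univ, hUuniv ▸ subset_rfl, isClosed_univ, isConnected_univ,
      infinite_univ_iff.2 hinf⟩
  · -- the component escapes V: it has two points
    obtain ⟨x, hxK, hxV⟩ := not_subset.1 hcase
    refine ⟨Subtype.val '' connectedComponent q, ?_, ?_, ?_, ?_⟩
    · exact image_subset_iff.2 fun z _ => (hVU z.2 : _)
    · exact hFclosed.isClosedEmbedding_subtypeVal.isClosedMap _ isClosed_connectedComponent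
    · exact isConnected_connectedComponent.image _ continuous_subtype_val.continuousOn
    · apply (isPreconnected_connectedComponent.image _
        continuous_subtype_val.continuousOn).infinite_of_nontrivial
      refine ⟨p, ⟨q, mem_connectedComponent, rfl⟩, x, ⟨x, hxK, rfl⟩, ?_⟩
      intro h
      exact hxV (by rw [mem_preimage, ← h]; exact hpV)
end

section
/- If P ⊆ 2^{<ω₁} has the Cantor tree property, p ∈ P, and dom(p) < α < ω₁, then there exists q ∈ P ∩ 2^α with q extending p. -/
noncomputable section

/-- The first uncountable ordinal `ω₁`. -/
def omega1 : Ordinal.{0} := (Cardinal.aleph 1).ord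

theorem omega1_isLimit : Order.IsSuccLimit omega1 := Cardinal.isSuccLimit_ord (Cardinal.aleph0_le_aleph 1)

/-- An element of `2^{<ω₁}`: a binary sequence of countable ordinal length. -/
def CSeq : Type 1 := Σ α : {o : Ordinal.{0} // o < omega1}, (Set.Iio α.1 → Bool)

namespace CSeq

def len (p : CSeq) : Ordinal.{0} := p.1.1

theorem len_lt (p : CSeq) : p.len < omega1 := p.1.2

/-- `q` extends `p` (i.e. `q ≤ p` in the tree order `p ≤ q ↔ p ⊇ q`). -/
def Ext (q p : CSeq) : Prop :=
  ∃ h : p.len ≤ q.len, ∀ i : Set.Iio p.len, q.2 ⟨i.1, lt_of_lt_of_le i.2 h⟩ = p.2 i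

/-- `p` and `q` are compatible: they have a common extension. -/
def Compat (p q : CSeq) : Prop := ∃ r : CSeq, r.Ext p ∧ r.Ext q

/-- The empty sequence (the root `𝟙` of the tree). -/
def empty : CSeq :=
  ⟨⟨0, omega1_isLimit.pos⟩, fun i => (not_lt_zero (a := i.1) i.2).elim⟩

/-- The one-bit extension `p⌢b`. -/
def append (p : CSeq) (b : Bool) : CSeq :=
  ⟨⟨Order.succ p.len, omega1_isLimit.succ_lt p.len_lt⟩,
    fun i => if h : i.1 < p.len then p.2 ⟨i.1, h⟩ else b⟩

end CSeq

/-- A Cantor tree of sequences `{p_s : s ∈ 2^{<ω}}`: each `p_{s⌢b}` properly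
extends `p_s`, and `p_{s⌢0}`, `p_{s⌢1}` are incompatible. -/
def CantorTreeSeq (ps : List Bool → CSeq) : Prop :=
  (∀ s : List Bool, ∀ b : Bool,
      (ps (s ++ [b])).Ext (ps s) ∧ (ps s).len < (ps (s ++ [b])).len) ∧
    ∀ s : List Bool, ¬ CSeq.Compat (ps (s ++ [true])) (ps (s ++ [false]))

/-- The finite prefix `f↾n` of a branch `f ∈ 2^ω`. -/
def prefixOf (f : ℕ → Bool) (n : ℕ) : List Bool := List.ofFn (fun i : Fin n => f i)

/-- `P ⊆ 2^{<ω₁}` has the Cantor tree property. The union `⋃_n p_{f↾n}` is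
expressed as the least common extension of the `p_{f↾n}`. -/
def CantorTreeProperty (P : Set CSeq) : Prop :=
  CSeq.empty ∈ P ∧
  (∀ p ∈ P, ∀ q : CSeq, p.Ext q → q ∈ P) ∧
  (∀ p ∈ P, ∀ b : Bool, p.append b ∈ P) ∧
  (∀ ps : List Bool → CSeq, (∀ s, ps s ∈ P) → CantorTreeSeq ps →
    ∃ f : ℕ → Bool, ∃ q ∈ P, (∀ n, q.Ext (ps (prefixOf f n))) ∧
      ∀ r : CSeq, (∀ n, r.Ext (ps (prefixOf f n))) → r.Ext q)

end

/-!
Induction on `α`. At a successor, extend to the predecessor and append a bit. At a countable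
limit `α`, enumerate `α` as `(γₙ)` and grow a Cantor tree inside `P`: each node of level `n + 1`
extends a one-bit extension of its parent (so siblings are incompatible) and, by the induction
hypothesis, can be chosen of length in `(γₙ, α)`. The Cantor tree property yields a branch whose
union `q` lies in `P`; its length exceeds every `γₙ`, and is at most `α` because `q` is the least
common extension of the branch.
-/

namespace CSeq

@[refl]
theorem Ext.refl (p : CSeq) : p.Ext p :=
  ⟨le_rfl, fun _ => rfl⟩

theorem Ext.trans {r q p : CSeq} (hrq : r.Ext q) (hqp : q.Ext p) : r.Ext p :=
  ⟨hqp.1.trans hrq.1, fun i => (hrq.2 ⟨i.1, i.2.trans_le hqp.1⟩).trans (hqp.2 i)⟩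

theorem Ext.len_le {q p : CSeq} (h : q.Ext p) : p.len ≤ q.len :=
  h.1

theorem len_append (p : CSeq) (b : Bool) : (p.append b).len = Order.succ p.len :=
  rfl

theorem append_ext (p : CSeq) (b : Bool) : (p.append b).Ext p :=
  ⟨Order.le_succ _, fun i => dif_pos i.2⟩

theorem append_apply_len (p : CSeq) (b : Bool) :
    (p.append b).2 ⟨p.len, Order.lt_succ p.len⟩ = b :=
  dif_neg (lt_irrefl _)

theorem not_compat_append_true_false (p : CSeq) :
    ¬ Compat (p.append true) (p.append false) := by
  rintro ⟨r, ht, hf⟩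
  have hr_true := (ht.2 ⟨p.len, Order.lt_succ p.len⟩).trans (p.append_apply_len true)
  have hr_false := (hf.2 ⟨p.len, Order.lt_succ p.len⟩).trans (p.append_apply_len false)
  exact Bool.noConfusion (hr_true.symm.trans hr_false)

def restrict (q : CSeq) {β : Ordinal.{0}} (hβ : β < omega1) (h : β ≤ q.len) : CSeq :=
  ⟨⟨β, hβ⟩, fun i => q.2 ⟨i.1, i.2.trans_le h⟩⟩

theorem Ext.restrict {q p : CSeq} (hqp : q.Ext p) {β : Ordinal.{0}} (hβ : β < omega1)
    (h : β ≤ q.len) (hpβ : p.len ≤ β) : (q.restrict hβ h).Ext p :=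
  ⟨hpβ, hqp.2⟩

/-- Otherwise the restriction of `q` to `β` would be a strictly shorter common extension. -/
theorem len_le_of_isLeast_ext {ι : Type*} {cs : ι → CSeq} {q : CSeq} (hq : ∀ i, q.Ext (cs i))
    (hmin : ∀ r : CSeq, (∀ i, r.Ext (cs i)) → r.Ext q) {β : Ordinal.{0}} (hβ : β < omega1)
    (hcs : ∀ i, (cs i).len ≤ β) : q.len ≤ β := by
  by_contra! hlt
  exact hlt.not_ge (hmin (q.restrict hβ hlt.le) fun i => (hq i).restrict hβ hlt.le (hcs i)).len_le

def growTree (root : CSeq) (step : ℕ → CSeq → Bool → CSeq) (s : List Bool) : CSeq :=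
  s.zipIdx.foldl (fun c x => step x.2 c x.1) root

theorem growTree_append_singleton (root : CSeq) (step : ℕ → CSeq → Bool → CSeq)
    (s : List Bool) (b : Bool) :
    growTree root step (s ++ [b]) = step s.length (growTree root step s) b := by
  simp [growTree, List.zipIdx_append]

end CSeq

theorem cantorTreeSeq_of_ext_append {ps : List Bool → CSeq}
    (h : ∀ s b, (ps (s ++ [b])).Ext ((ps s).append b)) : CantorTreeSeq ps := by
  refine ⟨fun s b => ⟨(h s b).trans ((ps s).append_ext b), ?_⟩, fun s ⟨r, ht, hf⟩ => ?_⟩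
  · exact (Order.lt_succ _).trans_le (h s b).len_le
  · exact (ps s).not_compat_append_true_false ⟨r, ht.trans (h s true), hf.trans (h s false)⟩

theorem prefixOf_succ (f : ℕ → Bool) (n : ℕ) : prefixOf f (n + 1) = prefixOf f n ++ [f n] := by
  simp only [prefixOf, List.ofFn_succ', List.concat_eq_append, Fin.val_castSucc, Fin.val_last]

theorem length_prefixOf (f : ℕ → Bool) (n : ℕ) : (prefixOf f n).length = n :=
  List.length_ofFn

theorem countable_Iio_of_lt_omega1 {α : Ordinal.{0}} (h : α < omega1) : Countable (Set.Iio α) := by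
  rw [← Cardinal.mk_le_aleph0_iff, Cardinal.mk_Iio_ordinal, ← Cardinal.lift_aleph0.{1, 0},
    Cardinal.lift_le, ← Order.lt_succ_iff, Cardinal.succ_aleph0, ← Cardinal.lt_ord]
  exact h

namespace CantorTreeProperty

variable {P : Set CSeq}

theorem append_mem (hP : CantorTreeProperty P) {p : CSeq} (hp : p ∈ P) (b : Bool) :
    p.append b ∈ P :=
  hP.2.2.1 p hp b

theorem exists_ext_len_eq_of_isSuccLimit (hP : CantorTreeProperty P) {α : Ordinal.{0}}
    (hα : Order.IsSuccLimit α) (hαω : α < omega1)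
    (ih : ∀ β < α, ∀ c ∈ P, c.len ≤ β → ∃ q ∈ P, q.len = β ∧ q.Ext c)
    {p : CSeq} (hp : p ∈ P) (hpα : p.len < α) :
    ∃ q ∈ P, q.len = α ∧ q.Ext p := by
  have : Countable (Set.Iio α) := countable_Iio_of_lt_omega1 hαω
  have : Nonempty (Set.Iio α) := ⟨⟨p.len, hpα⟩⟩
  obtain ⟨e, he⟩ := exists_surjective_nat (Set.Iio α)
  have hstep : ∀ (n : ℕ) (c : CSeq) (b : Bool), ∃ d : CSeq, c ∈ P → c.len < α →
      d ∈ P ∧ d.len < α ∧ (e n).1 < d.len ∧ d.Ext (c.append b) := by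
    intro n c b
    by_cases hc : c ∈ P ∧ c.len < α
    · have hβ : Order.succ (max (c.append b).len (e n).1) < α :=
        hα.succ_lt (max_lt (hα.succ_lt hc.2) (e n).2)
      obtain ⟨d, hdP, hd, hdc⟩ := ih _ hβ (c.append b) (hP.append_mem hc.1 b)
        ((le_max_left _ _).trans (Order.le_succ _))
      refine ⟨d, fun _ _ => ⟨hdP, hd ▸ hβ, ?_, hdc⟩⟩
      rw [hd]
      exact (le_max_right _ _).trans_lt (Order.lt_succ _)
    · exact ⟨c, fun hcP hcα => absurd ⟨hcP, hcα⟩ hc⟩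
  choose step hstep using hstep
  set ps := CSeq.growTree p step
  have hsnoc : ∀ s b, ps (s ++ [b]) = step s.length (ps s) b :=
    CSeq.growTree_append_singleton p step
  have hps : ∀ s, ps s ∈ P ∧ (ps s).len < α ∧ (ps s).Ext p := by
    intro s
    induction s using List.reverseRecOn with
    | nil => exact ⟨hp, hpα, .refl p⟩
    | append_singleton s b ih =>
      obtain ⟨hmem, hlt, hext⟩ := ih
      obtain ⟨hdP, hdα, -, hd⟩ := hstep s.length (ps s) b hmem hlt
      rw [hsnoc]
      exact ⟨hdP, hdα, hd.trans (((ps s).append_ext b).trans hext)⟩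
  have htree : CantorTreeSeq ps := cantorTreeSeq_of_ext_append fun s b => by
    rw [hsnoc]
    exact (hstep _ _ b (hps s).1 (hps s).2.1).2.2.2
  obtain ⟨f, q, hqP, hq, hmin⟩ := hP.2.2.2 ps (fun s => (hps s).1) htree
  have hαq : α ≤ q.len := by
    refine le_of_forall_lt fun γ hγ => ?_
    obtain ⟨n, hn⟩ := he ⟨γ, hγ⟩
    have hlevel : (e n).1 < (ps (prefixOf f (n + 1))).len := by
      rw [prefixOf_succ, hsnoc, length_prefixOf]
      exact (hstep n _ (f n) (hps _).1 (hps _).2.1).2.2.1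
    rw [hn] at hlevel
    exact hlevel.trans_le (hq (n + 1)).len_le
  exact ⟨q, hqP,
    (CSeq.len_le_of_isLeast_ext hq hmin hαω fun n => (hps _).2.1.le).antisymm hαq,
    (hq 0).trans (hps _).2.2⟩

theorem exists_ext_len_eq (hP : CantorTreeProperty P) {α : Ordinal.{0}} (hα : α < omega1)
    {p : CSeq} (hp : p ∈ P) (hpα : p.len ≤ α) : ∃ q ∈ P, q.len = α ∧ q.Ext p := by
  induction α using Ordinal.limitRecOn generalizing p with
  | zero => exact ⟨p, hp, nonpos_iff_eq_zero.mp hpα, .refl p⟩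
  | add_one β ih =>
    rcases hpα.eq_or_lt with hpβ | hpβ
    · exact ⟨p, hp, hpβ, .refl p⟩
    obtain ⟨q, hqP, hqβ, hqp⟩ := ih ((Order.lt_add_one_iff.2 le_rfl).trans hα) hp
      (Order.lt_add_one_iff.1 hpβ)
    refine ⟨q.append true, hP.append_mem hqP true, ?_, (q.append_ext true).trans hqp⟩
    rw [CSeq.len_append, hqβ, Order.succ_eq_add_one]
  | limit α hlim ih =>
    rcases hpα.eq_or_lt with hpα | hpα
    · exact ⟨p, hp, hpα, .refl p⟩
    exact hP.exists_ext_len_eq_of_isSuccLimit hlim hα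
      (fun β hβ c hc hcβ => ih β hβ (hβ.trans hα) hc hcβ) hp hpα

end CantorTreeProperty

theorem stmt17 (P : Set CSeq) (hP : CantorTreeProperty P)
    (p : CSeq) (hp : p ∈ P) (α : Ordinal) (h1 : p.len < α) (h2 : α < omega1) :
    ∃ q ∈ P, q.len = α ∧ q.Ext p :=
  hP.exists_ext_len_eq h2 hp h1.le
end
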